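/- arXiv:2603.21021 — 5 statements merged into one kernel-verified Lean document; each statement's English description precedes it below -/
import Mathlib

section
/- Let m and n be positive integers with m even, let A be an m×n matrix and Y = (Y_{i,j})_{1≤i,j≤n} a skew-symmetric n×n matrix over a commutative ring. Then Σ_{I⊆[n], |I|=m} Pf(Y_{I,I}) · det(Aᴵ) = Pf(A·Y·Aᵗ). -/
open Matrix

/-- The Pfaffian of a `2k × 2k` matrix, defined as the sum over perfect matchings
of `{1, …, 2k}` (encoded by the permutation listing the matched pairs
`(σ(1),σ(2)), (σ(3),σ(4)), …` in normal form, whose sign equals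
`(−1)^{cr(μ)}` for the matching `μ`) of the sign of the matching times the
product of the corresponding matrix entries. -/
def pfaffian {R : Type*} [CommRing R] {k : ℕ} (Y : Matrix (Fin (2*k)) (Fin (2*k)) R) : R :=
  ∑ σ ∈ Finset.univ.filter (fun σ : Equiv.Perm (Fin (2*k)) =>
      (∀ i : Fin k,
        σ ⟨2*(i:ℕ), by have := i.isLt; omega⟩ < σ ⟨2*(i:ℕ)+1, by have := i.isLt; omega⟩) ∧
      (∀ i j : Fin k, i < j →
        σ ⟨2*(i:ℕ), by have := i.isLt; omega⟩ < σ ⟨2*(j:ℕ), by have := j.isLt; omega⟩)),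
    ((Equiv.Perm.sign σ : ℤ) : R) *
      ∏ i : Fin k, Y (σ ⟨2*(i:ℕ), by have := i.isLt; omega⟩) (σ ⟨2*(i:ℕ)+1, by have := i.isLt; omega⟩)

/-- Strictly increasing functions `Fin k → Fin n`; these encode the `k`-element
subsets of `{1,…,n}` listed in increasing order. -/
def incrFuns (k n : ℕ) : Finset (Fin k → Fin n) :=
  Finset.univ.filter fun f => ∀ a b : Fin k, a < b → f a < f b


/-!
Expanding every entry of `A Y Aᵀ` multilinearly gives
`Pf(A Y Aᵀ) = ∑_g (∏ₓ A x (g x)) Pf(Y_{g,g})` over all maps `g : [m] → [n]`. The terms with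
`g` not injective vanish, and an injective `g` is uniquely `I ∘ τ` with `I` increasing and `τ` a
permutation; since `Pf(Y_{I∘τ,I∘τ}) = sgn τ · Pf(Y_{I,I})`, the sum over `τ` produces `det(Aᴵ)`.

Both properties of the Pfaffian come from reading it as a sum over the left cosets of the
hyperoctahedral group `(S₂)ᵏ ⋊ Sₖ`, which permutes the pairs `{2i, 2i+1}` and the two elements
within each pair: by skew-symmetry the signed term `sgn σ ∏ᵢ M (σ (2i)) (σ (2i+1))` is constant on
each coset, and each coset contains exactly one permutation of the defining sum. Relabelling by
`τ` permutes the cosets; if two indices `a ≠ b` carry equal rows and columns, left multiplication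
by the transposition `(a b)` is a sign-reversing involution on the cosets whose fixed cosets are
those matching `a` with `b`, and their terms contain the factor `M a b = 0`.
-/

open Equiv Equiv.Perm Finset

lemma Equiv.Perm.fin_two_eq_one_or_eq_swap (e : Perm (Fin 2)) : e = 1 ∨ e = swap 0 1 := by
  revert e
  decide

lemma Equiv.Perm.apply_eq_of_commute_swap {α : Type*} [DecidableEq α] {f : Perm α} {u v : α}
    (h : Commute (swap u v) f) (huv : u ≠ v) (hfu : f u ≠ u) : f u = v := by
  by_contra hfv
  have := congrArg (· u) h.eq
  simp only [Perm.mul_apply, swap_apply_left, swap_apply_of_ne_of_ne hfu hfv] at this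
  exact huv (f.injective this)

lemma Int.cast_units_mul_self {R : Type*} [Ring R] (u : ℤˣ) : ((u : ℤ) : R) * u = 1 := by
  rw [← Int.cast_mul, ← Units.val_mul, Int.units_mul_self, Units.val_one, Int.cast_one]

namespace Matrix

lemma transpose_submatrix_eq_neg {R ι κ : Type*} [Neg R] {M : Matrix ι ι R} (hM : Mᵀ = -M)
    (f : κ → ι) :
    (M.submatrix f f)ᵀ = -M.submatrix f f := by
  rw [transpose_submatrix, hM]
  rfl

lemma apply_perm_fin_two_of_transpose_eq_neg {R ι : Type*} [Ring R] {M : Matrix ι ι R}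
    (hM : Mᵀ = -M) (x : Fin 2 → ι) (e : Perm (Fin 2)) :
    M (x (e 0)) (x (e 1)) = sign e * M (x 0) (x 1) := by
  rcases fin_two_eq_one_or_eq_swap e with rfl | rfl
  · simp
  · simpa [sign_swap] using congrFun (congrFun hM (x 0)) (x 1)

lemma prod_mul_mul_transpose_apply {R κ X ι : Type*} [CommSemiring R] [Fintype κ]
    [DecidableEq κ] [Fintype X] [DecidableEq X] [Fintype ι] (A : Matrix X ι R)
    (Y : Matrix ι ι R) (ℓ : κ × Fin 2 ≃ X) :
    ∏ i, (A * Y * Aᵀ) (ℓ (i, 0)) (ℓ (i, 1))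
      = ∑ g : X → ι, (∏ x, A x (g x)) * ∏ i, Y (g (ℓ (i, 0))) (g (ℓ (i, 1))) := by
  have hentry u v :
      (A * Y * Aᵀ) u v = ∑ e : Fin 2 → ι, A u (e 0) * Y (e 0) (e 1) * A v (e 1) := by
    rw [← (piFinTwoEquiv fun _ => ι).symm.sum_comp, Fintype.sum_prod_type, sum_comm]
    simp [mul_apply, sum_mul]
  have hA (g : X → ι) :
      ∏ x, A x (g x) = ∏ i, A (ℓ (i, 0)) (g (ℓ (i, 0))) * A (ℓ (i, 1)) (g (ℓ (i, 1))) := by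
    rw [← ℓ.prod_comp, Fintype.prod_prod_type]
    simp [Fin.prod_univ_two]
  calc ∏ i, (A * Y * Aᵀ) (ℓ (i, 0)) (ℓ (i, 1))
      = ∑ E : κ → Fin 2 → ι, ∏ i,
          A (ℓ (i, 0)) (E i 0) * Y (E i 0) (E i 1) * A (ℓ (i, 1)) (E i 1) := by
        simp only [hentry, Fintype.prod_sum]
    _ = ∑ g : X → ι, ∏ i, A (ℓ (i, 0)) (g (ℓ (i, 0))) * Y (g (ℓ (i, 0))) (g (ℓ (i, 1)))
          * A (ℓ (i, 1)) (g (ℓ (i, 1))) :=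
        (Fintype.sum_equiv ((ℓ.arrowCongr (Equiv.refl ι)).symm.trans (Equiv.curry _ _ _)) _ _
          fun g => rfl).symm
    _ = _ := by
        refine sum_congr rfl fun g _ => ?_
        rw [hA, ← prod_mul_distrib]
        exact prod_congr rfl fun i _ => by ring

end Matrix

lemma mem_incrFuns {m n : ℕ} {f : Fin m → Fin n} : f ∈ incrFuns m n ↔ StrictMono f := by
  simp [incrFuns, StrictMono]

lemma sum_incrFuns_sum_perm {M : Type*} [AddCommMonoid M] {m n : ℕ}
    (F : (Fin m → Fin n) → M) :
    ∑ I ∈ incrFuns m n, ∑ τ : Perm (Fin m), F (I ∘ τ)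
      = ∑ g ∈ univ.filter Function.Injective, F g := by
  rw [← sum_product']
  refine sum_nbij' (fun p => p.1 ∘ p.2) (fun g => (g ∘ Tuple.sort g, (Tuple.sort g)⁻¹))
    ?_ ?_ ?_ ?_ fun _ _ => rfl
  · rintro ⟨I, τ⟩ h
    rw [mem_product, mem_incrFuns] at h
    simpa using h.1.injective.comp τ.injective
  · intro g hg
    rw [mem_filter] at hg
    simpa [mem_incrFuns] using
      (Tuple.monotone_sort g).strictMono_of_injective (hg.2.comp (Tuple.sort g).injective)
  · rintro ⟨I, τ⟩ h
    rw [mem_product, mem_incrFuns] at h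
    have hcomp : (I ∘ τ) ∘ ⇑τ⁻¹ = I := by ext; simp
    have hsort : Tuple.sort (I ∘ τ) = τ⁻¹ := by
      refine (Tuple.eq_sort_iff.mpr ⟨?_, fun i j hij hIij => ?_⟩).symm
      · rw [hcomp]
        exact h.1.monotone
      · exact absurd (h.1.injective (by simpa using hIij)) hij.ne
    simp only [hsort, hcomp, inv_inv]
  · intro g _
    ext1 x
    simp

namespace Pfaffian

variable {k : ℕ}

def pairEquiv (k : ℕ) : Fin k × Fin 2 ≃ Fin (2 * k) :=
  finProdFinEquiv.trans (finCongr (Nat.mul_comm k 2))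

lemma mk_two_mul_eq_pairEquiv (i : Fin k) (h : 2 * (i : ℕ) < 2 * k) :
    (⟨2 * i, h⟩ : Fin (2 * k)) = pairEquiv k (i, 0) :=
  Fin.ext (by simp [pairEquiv, mul_comm])

lemma mk_two_mul_add_one_eq_pairEquiv (i : Fin k) (h : 2 * (i : ℕ) + 1 < 2 * k) :
    (⟨2 * i + 1, h⟩ : Fin (2 * k)) = pairEquiv k (i, 1) :=
  Fin.ext (by simp [pairEquiv]; ring)

lemma perm_ext_pairEquiv {σ τ : Perm (Fin (2 * k))}
    (h : ∀ i b, σ (pairEquiv k (i, b)) = τ (pairEquiv k (i, b))) : σ = τ :=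
  Equiv.ext fun x => by simpa using h ((pairEquiv k).symm x).1 ((pairEquiv k).symm x).2

def hyperoctahedral (c : Perm (Fin k)) (ε : Fin k → Perm (Fin 2)) : Perm (Fin (2 * k)) :=
  (pairEquiv k).permCongr (prodShear c ε)

@[simp]
lemma hyperoctahedral_apply (c : Perm (Fin k)) (ε : Fin k → Perm (Fin 2)) (i : Fin k)
    (b : Fin 2) : hyperoctahedral c ε (pairEquiv k (i, b)) = pairEquiv k (c i, ε i b) := by
  simp [hyperoctahedral, permCongr_apply]

lemma hyperoctahedral_mul (c d : Perm (Fin k)) (ε δ : Fin k → Perm (Fin 2)) :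
    hyperoctahedral c ε * hyperoctahedral d δ
      = hyperoctahedral (c * d) (fun i => ε (d i) * δ i) :=
  perm_ext_pairEquiv fun i b => by simp

lemma hyperoctahedral_one : hyperoctahedral (1 : Perm (Fin k)) 1 = 1 :=
  perm_ext_pairEquiv fun i b => by simp

lemma hyperoctahedral_inv (c : Perm (Fin k)) (ε : Fin k → Perm (Fin 2)) :
    (hyperoctahedral c ε)⁻¹ = hyperoctahedral c⁻¹ (fun i => (ε (c⁻¹ i))⁻¹) := by
  rw [inv_eq_iff_mul_eq_one, hyperoctahedral_mul]
  convert hyperoctahedral_one <;> ext <;> simp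

lemma sign_hyperoctahedral (c : Perm (Fin k)) (ε : Fin k → Perm (Fin 2)) :
    sign (hyperoctahedral c ε) = ∏ i, sign (ε i) := by
  have : prodShear c ε = prodCongrLeft (fun _ => c) * prodCongrRight ε := by ext <;> rfl
  rw [hyperoctahedral, sign_permCongr, this, Perm.sign_mul, sign_prodCongrLeft,
    sign_prodCongrRight, Fin.prod_univ_two, Int.units_mul_self, one_mul]

def hyperoctahedralGroup (k : ℕ) : Subgroup (Perm (Fin (2 * k))) where
  carrier := {h | ∃ c ε, hyperoctahedral c ε = h}
  mul_mem' := by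
    rintro _ _ ⟨c, ε, rfl⟩ ⟨d, δ, rfl⟩
    exact ⟨_, _, (hyperoctahedral_mul c d ε δ).symm⟩
  one_mem' := ⟨1, 1, hyperoctahedral_one⟩
  inv_mem' := by
    rintro _ ⟨c, ε, rfl⟩
    exact ⟨_, _, (hyperoctahedral_inv c ε).symm⟩

instance : DecidablePred (· ∈ hyperoctahedralGroup k) := fun h =>
  inferInstanceAs (Decidable (∃ c ε, hyperoctahedral c ε = h))

def pairSwap (k : ℕ) : Perm (Fin (2 * k)) :=
  hyperoctahedral 1 fun _ => swap 0 1

lemma commute_pairSwap_of_mem_hyperoctahedralGroup {h : Perm (Fin (2 * k))}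
    (hh : h ∈ hyperoctahedralGroup k) : Commute h (pairSwap k) := by
  obtain ⟨c, ε, rfl⟩ := hh
  refine perm_ext_pairEquiv fun i b => ?_
  rcases fin_two_eq_one_or_eq_swap (ε i) with hε | hε <;> simp [pairSwap, hε]

lemma exists_pair_of_swap_mem_hyperoctahedralGroup {u v : Fin (2 * k)}
    (h : swap u v ∈ hyperoctahedralGroup k) (huv : u ≠ v) :
    ∃ i, ∃ e : Perm (Fin 2), u = pairEquiv k (i, e 0) ∧ v = pairEquiv k (i, e 1) := by
  obtain ⟨⟨i, b⟩, rfl⟩ := (pairEquiv k).surjective u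
  have hv := apply_eq_of_commute_swap (commute_pairSwap_of_mem_hyperoctahedralGroup h) huv (by
    simpa [pairSwap] using (by decide : ∀ b : Fin 2, swap 0 1 b ≠ b) b)
  refine ⟨i, swap 0 b, by simp, ?_⟩
  rw [← hv, pairSwap, hyperoctahedral_apply]
  simpa using (by decide : ∀ b : Fin 2, swap 0 1 b = swap 0 b 1) b

variable {R : Type*} [CommRing R]

def pfaffianTerm (M : Matrix (Fin (2 * k)) (Fin (2 * k)) R) (σ : Perm (Fin (2 * k))) : R :=
  sign σ * ∏ i, M (σ (pairEquiv k (i, 0))) (σ (pairEquiv k (i, 1)))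

def matchingPerms (k : ℕ) : Finset (Perm (Fin (2 * k))) :=
  {σ | (∀ i, σ (pairEquiv k (i, 0)) < σ (pairEquiv k (i, 1))) ∧
    StrictMono fun i => σ (pairEquiv k (i, 0))}

lemma mem_matchingPerms {σ : Perm (Fin (2 * k))} : σ ∈ matchingPerms k ↔
    (∀ i, σ (pairEquiv k (i, 0)) < σ (pairEquiv k (i, 1))) ∧
      StrictMono fun i => σ (pairEquiv k (i, 0)) := by
  simp [matchingPerms]

lemma pfaffian_eq_sum_pfaffianTerm (M : Matrix (Fin (2 * k)) (Fin (2 * k)) R) :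
    pfaffian M = ∑ σ ∈ matchingPerms k, pfaffianTerm M σ := by
  simp only [pfaffian, matchingPerms, pfaffianTerm, mk_two_mul_eq_pairEquiv,
    mk_two_mul_add_one_eq_pairEquiv]
  rfl

lemma pfaffianTerm_mul_left (M : Matrix (Fin (2 * k)) (Fin (2 * k)) R)
    (τ σ : Perm (Fin (2 * k))) :
    pfaffianTerm M (τ * σ) = sign τ * pfaffianTerm (M.submatrix τ τ) σ := by
  simp only [pfaffianTerm, Perm.mul_apply, Perm.sign_mul, Matrix.submatrix_apply]
  push_cast
  ring

lemma pfaffianTerm_mul_hyperoctahedral {M : Matrix (Fin (2 * k)) (Fin (2 * k)) R}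
    (hM : Mᵀ = -M) (σ : Perm (Fin (2 * k))) (c : Perm (Fin k)) (ε : Fin k → Perm (Fin 2)) :
    pfaffianTerm M (σ * hyperoctahedral c ε) = pfaffianTerm M σ := by
  set P := ∏ i, M (σ (pairEquiv k (i, 0))) (σ (pairEquiv k (i, 1)))
  have hprod : ∏ i, M (σ (pairEquiv k (c i, ε i 0))) (σ (pairEquiv k (c i, ε i 1)))
      = sign (hyperoctahedral c ε) * P := by
    have hpair i := Matrix.apply_perm_fin_two_of_transpose_eq_neg hM
      (fun b => σ (pairEquiv k (c i, b))) (ε i)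
    simp only [hpair, prod_mul_distrib, sign_hyperoctahedral]
    push_cast
    rw [Equiv.prod_comp c fun j => M (σ (pairEquiv k (j, 0))) (σ (pairEquiv k (j, 1)))]
  simp only [pfaffianTerm, Perm.mul_apply, hyperoctahedral_apply, Perm.sign_mul, hprod,
    Units.val_mul, Int.cast_mul]
  linear_combination
    (sign σ * P : R) * Int.cast_units_mul_self (R := R) (sign (hyperoctahedral c ε))

lemma exists_mul_hyperoctahedral_mem_matchingPerms (σ : Perm (Fin (2 * k))) :
    ∃ c ε, σ * hyperoctahedral c ε ∈ matchingPerms k := by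
  -- orient each pair increasingly, then sort the pairs by their smaller element
  let ε : Fin k → Perm (Fin 2) := fun i =>
    if σ (pairEquiv k (i, 1)) < σ (pairEquiv k (i, 0)) then swap 0 1 else 1
  have horient i : σ (pairEquiv k (i, ε i 0)) < σ (pairEquiv k (i, ε i 1)) := by
    have hne : σ (pairEquiv k (i, 0)) ≠ σ (pairEquiv k (i, 1)) := by simp
    by_cases h : σ (pairEquiv k (i, 1)) < σ (pairEquiv k (i, 0))
    · simp [ε, h]
    · simpa [ε, h] using lt_of_le_of_ne (not_lt.mp h) hne
  let m i := σ (pairEquiv k (i, ε i 0))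
  have hm : Function.Injective m := fun i j hij => by
    simpa [m] using congrArg Prod.fst ((pairEquiv k).injective (σ.injective hij))
  refine ⟨Tuple.sort m, fun i => ε (Tuple.sort m i), mem_matchingPerms.mpr ?_⟩
  simp only [Perm.mul_apply, hyperoctahedral_apply]
  exact ⟨fun i => horient _,
    (Tuple.monotone_sort m).strictMono_of_injective (hm.comp (Tuple.sort m).injective)⟩

lemma hyperoctahedral_eq_one_of_mul_mem_matchingPerms {ρ : Perm (Fin (2 * k))}
    {c : Perm (Fin k)} {ε : Fin k → Perm (Fin 2)} (hρ : ρ ∈ matchingPerms k)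
    (h : ρ * hyperoctahedral c ε ∈ matchingPerms k) : hyperoctahedral c ε = 1 := by
  rw [mem_matchingPerms] at hρ h
  simp only [Perm.mul_apply, hyperoctahedral_apply] at h
  have hε : ε = 1 := by
    ext1 i
    refine (fin_two_eq_one_or_eq_swap (ε i)).resolve_right fun hi => ?_
    have := h.1 i
    simp only [hi, swap_apply_left, swap_apply_right] at this
    exact lt_asymm this (hρ.1 (c i))
  subst hε
  have hc : StrictMono c := fun i j hij => hρ.2.lt_iff_lt.mp (by simpa using h.2 hij)
  have : c = 1 := Equiv.ext fun i =>
    Fin.ext (Fin.coe_orderIso_apply (hc.orderIsoOfSurjective c c.surjective) i)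
  rw [this, hyperoctahedral_one]

lemma pfaffianTerm_eq_of_mk_eq {M : Matrix (Fin (2 * k)) (Fin (2 * k)) R} (hM : Mᵀ = -M)
    {σ ρ : Perm (Fin (2 * k))} (h : (σ : Perm (Fin (2 * k)) ⧸ hyperoctahedralGroup k) = ρ) :
    pfaffianTerm M σ = pfaffianTerm M ρ := by
  obtain ⟨c, ε, hce⟩ := QuotientGroup.eq.mp h
  rw [← pfaffianTerm_mul_hyperoctahedral hM σ c ε, hce, mul_inv_cancel_left]

lemma pfaffianTerm_out_smul {M : Matrix (Fin (2 * k)) (Fin (2 * k)) R} (hM : Mᵀ = -M)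
    (τ : Perm (Fin (2 * k))) (q : Perm (Fin (2 * k)) ⧸ hyperoctahedralGroup k) :
    pfaffianTerm M (τ • q).out = pfaffianTerm M (τ * q.out) :=
  pfaffianTerm_eq_of_mk_eq hM
    ((QuotientGroup.out_eq' _).trans (MulAction.Quotient.mk_smul_out _ τ q).symm)

lemma pfaffian_eq_sum_quotient {M : Matrix (Fin (2 * k)) (Fin (2 * k)) R} (hM : Mᵀ = -M) :
    pfaffian M = ∑ q : Perm (Fin (2 * k)) ⧸ hyperoctahedralGroup k, pfaffianTerm M q.out := by
  rw [pfaffian_eq_sum_pfaffianTerm]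
  refine sum_bij (fun ρ _ => (ρ : Perm (Fin (2 * k)) ⧸ hyperoctahedralGroup k))
    (fun _ _ => mem_univ _) (fun ρ hρ ρ' hρ' h => ?_) (fun q _ => ?_)
    (fun ρ _ => (pfaffianTerm_eq_of_mk_eq hM (QuotientGroup.out_eq' _)).symm)
  · obtain ⟨c, ε, hce⟩ := QuotientGroup.eq.mp h
    have heq : ρ' = ρ * hyperoctahedral c ε := by rw [hce, mul_inv_cancel_left]
    rw [heq, hyperoctahedral_eq_one_of_mul_mem_matchingPerms hρ (heq ▸ hρ'), mul_one]
  · obtain ⟨σ, rfl⟩ := QuotientGroup.mk_surjective q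
    obtain ⟨c, ε, hσ⟩ := exists_mul_hyperoctahedral_mem_matchingPerms σ
    exact ⟨_, hσ, QuotientGroup.mk_mul_of_mem σ ⟨c, ε, rfl⟩⟩

theorem pfaffian_submatrix_perm {M : Matrix (Fin (2 * k)) (Fin (2 * k)) R} (hM : Mᵀ = -M)
    (τ : Perm (Fin (2 * k))) : pfaffian (M.submatrix τ τ) = sign τ * pfaffian M := by
  have hterm σ : pfaffianTerm (M.submatrix τ τ) σ = sign τ * pfaffianTerm M (τ * σ) := by
    rw [pfaffianTerm_mul_left, ← mul_assoc, Int.cast_units_mul_self, one_mul]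
  rw [pfaffian_eq_sum_quotient (Matrix.transpose_submatrix_eq_neg hM τ),
    pfaffian_eq_sum_quotient hM, mul_sum]
  simp only [hterm, ← pfaffianTerm_out_smul hM]
  exact Fintype.sum_equiv (MulAction.toPerm τ) _ _ fun q => rfl

lemma pfaffianTerm_eq_zero_of_conj_swap_mem {M : Matrix (Fin (2 * k)) (Fin (2 * k)) R}
    (hM : Mᵀ = -M) {a b : Fin (2 * k)} (hab : a ≠ b) (hM0 : M a b = 0)
    {σ : Perm (Fin (2 * k))} (h : σ⁻¹ * (swap a b * σ) ∈ hyperoctahedralGroup k) :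
    pfaffianTerm M σ = 0 := by
  replace h : swap (σ⁻¹ a) (σ⁻¹ b) ∈ hyperoctahedralGroup k := by
    rwa [swap_apply_apply, inv_inv, mul_assoc]
  obtain ⟨i, e, hu, hv⟩ := exists_pair_of_swap_mem_hyperoctahedralGroup h (by simpa using hab)
  have hfactor : M (σ (pairEquiv k (i, 0))) (σ (pairEquiv k (i, 1))) = 0 := by
    have := Matrix.apply_perm_fin_two_of_transpose_eq_neg hM
      (fun b => σ (pairEquiv k (i, e b))) e⁻¹
    simpa only [← hu, ← hv, Perm.coe_inv, apply_symm_apply, hM0, mul_zero] using this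
  rw [pfaffianTerm, prod_eq_zero (mem_univ i) hfactor, mul_zero]

theorem pfaffian_eq_zero_of_submatrix_swap {M : Matrix (Fin (2 * k)) (Fin (2 * k)) R}
    (hM : Mᵀ = -M) {a b : Fin (2 * k)} (hab : a ≠ b)
    (hswap : M.submatrix (swap a b) (swap a b) = M) (hM0 : M a b = 0) : pfaffian M = 0 := by
  rw [pfaffian_eq_sum_quotient hM]
  refine sum_ninvolution (swap a b • ·) (fun q => ?_) (fun q hq hfix => hq ?_)
    (fun _ => mem_univ _) (fun q => by rw [← mul_smul, Equiv.swap_mul_self, one_smul])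
  · rw [pfaffianTerm_out_smul hM, pfaffianTerm_mul_left, hswap, sign_swap hab]
    push_cast
    ring
  · refine pfaffianTerm_eq_zero_of_conj_swap_mem hM hab hM0 (QuotientGroup.eq.mp ?_)
    exact (QuotientGroup.out_eq' q).trans
      (hfix.symm.trans (MulAction.Quotient.mk_smul_out _ _ q).symm)

theorem pfaffian_submatrix_eq_zero_of_not_injective {ι : Type*} {Y : Matrix ι ι R}
    (hY : Yᵀ = -Y) (hdiag : ∀ i, Y i i = 0) {g : Fin (2 * k) → ι} (hg : ¬ g.Injective) :
    pfaffian (Y.submatrix g g) = 0 := by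
  obtain ⟨a, b, hgab, hab⟩ := Function.not_injective_iff.mp hg
  refine pfaffian_eq_zero_of_submatrix_swap (Matrix.transpose_submatrix_eq_neg hY g) hab ?_
    (by simp [hgab, hdiag])
  rw [Matrix.submatrix_submatrix, comp_swap_eq_update, hgab, Function.update_eq_self, ← hgab,
    Function.update_eq_self]

lemma pfaffianTerm_mul_mul_transpose {ι : Type*} [Fintype ι] (A : Matrix (Fin (2 * k)) ι R)
    (Y : Matrix ι ι R) (σ : Perm (Fin (2 * k))) :
    pfaffianTerm (A * Y * Aᵀ) σ
      = ∑ g : Fin (2 * k) → ι, (∏ x, A x (g x)) * pfaffianTerm (Y.submatrix g g) σ := by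
  have hexpand := Matrix.prod_mul_mul_transpose_apply A Y ((pairEquiv k).trans σ)
  simp only [trans_apply] at hexpand
  rw [pfaffianTerm, hexpand, mul_sum]
  refine sum_congr rfl fun g _ => ?_
  simp only [pfaffianTerm, Matrix.submatrix_apply]
  ring

theorem pfaffian_mul_mul_transpose {ι : Type*} [Fintype ι] (A : Matrix (Fin (2 * k)) ι R)
    (Y : Matrix ι ι R) :
    pfaffian (A * Y * Aᵀ)
      = ∑ g : Fin (2 * k) → ι, (∏ x, A x (g x)) * pfaffian (Y.submatrix g g) := by
  simp only [pfaffian_eq_sum_pfaffianTerm, pfaffianTerm_mul_mul_transpose, mul_sum]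
  exact sum_comm

lemma pfaffian_submatrix_mul_det {ι : Type*} (A : Matrix (Fin (2 * k)) ι R)
    {Y : Matrix ι ι R} (hY : Yᵀ = -Y) (f : Fin (2 * k) → ι) :
    pfaffian (Y.submatrix f f) * (A.submatrix id f).det
      = ∑ τ : Perm (Fin (2 * k)),
          (∏ x, A x ((f ∘ τ) x)) * pfaffian (Y.submatrix (f ∘ τ) (f ∘ τ)) := by
  rw [← Matrix.det_transpose, Matrix.det_apply', mul_sum]
  refine sum_congr rfl fun τ _ => ?_
  rw [← Matrix.submatrix_submatrix,
    pfaffian_submatrix_perm (Matrix.transpose_submatrix_eq_neg hY f)]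
  simp only [Matrix.transpose_apply, Matrix.submatrix_apply, id, Function.comp_apply]
  ring

end Pfaffian

open Pfaffian in
theorem ishikawa_wakayama_minor_summation_general {R : Type*} [CommRing R] (k n : ℕ)
    (A : Matrix (Fin (2*k)) (Fin n) R)
    (Y : Matrix (Fin n) (Fin n) R) (hY : Yᵀ = -Y) (hdiag : ∀ i, Y i i = 0) :
    (∑ fI ∈ incrFuns (2*k) n, pfaffian (Y.submatrix fI fI) * (A.submatrix id fI).det)
      = pfaffian (A * Y * Aᵀ) := by
  calc _ = ∑ g ∈ univ.filter Function.Injective,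
        (∏ x, A x (g x)) * pfaffian (Y.submatrix g g) := by
        rw [← sum_incrFuns_sum_perm]
        exact sum_congr rfl fun fI _ => pfaffian_submatrix_mul_det A hY fI
    _ = ∑ g, (∏ x, A x (g x)) * pfaffian (Y.submatrix g g) :=
        sum_subset (filter_subset _ _) fun g _ hg => by
          rw [pfaffian_submatrix_eq_zero_of_not_injective hY hdiag (by simpa using hg), mul_zero]
    _ = _ := (pfaffian_mul_mul_transpose A Y).symm

/-- The Pfaffian minor summation formula of Ishikawa and Wakayama: for `m = 2k` even,
an `m × n` matrix `A` and a skew-symmetric `n × n` matrix `Y`,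
`Σ_{I⊆[n], |I|=m} Pf(Y_{I,I}) det(Aᴵ) = Pf(A·Y·Aᵗ)`. -/
theorem ishikawa_wakayama_minor_summation {R : Type*} [CommRing R] (k n : ℕ)
    (hk : 0 < k) (hn : 0 < n) (A : Matrix (Fin (2*k)) (Fin n) R)
    (Y : Matrix (Fin n) (Fin n) R) (hY : Yᵀ = -Y) (hdiag : ∀ i, Y i i = 0) :
    (∑ fI ∈ incrFuns (2*k) n, pfaffian (Y.submatrix fI fI) * (A.submatrix id fI).det)
      = pfaffian (A * Y * Aᵀ) :=
  ishikawa_wakayama_minor_summation_general k n A Y hY hdiag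
end

section
/- Let m be an even positive integer, n a positive integer, I a subset of [n] with |I| = m, and Y = (Y_{i,j})_{1≤i,j≤n} a skew-symmetric n×n matrix over a commutative ring. Let X be the n×n upper triangular matrix with 0's on the main diagonal, X_{i,j} = Y_{i,j} for 1 ≤ i < j ≤ n, and X_{i,j} = 0 for i > j. Then Σ (−1)^{binom(m/2, 2) + inv(J,K)} det(X_{J,K}) = Pf(Y_{I,I}), where the sum is over all pairs of disjoint subsets J, K of [n] with |J| = |K| = m/2 and J ∪ K = I, and inv(J,K) denotes the number of pairs (j,k) with j ∈ J, k ∈ K and j > k. -/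
open Matrix

/-!
Expanding each determinant, the left side becomes a sum over pairs `(J, τ)` with `τ` a bijection
from `J` onto `K = I \ J`. Only entries above the diagonal survive, so the nonzero terms are those
with `j < τ j` for all `j ∈ J`: these are exactly the perfect matchings of `I`, each met once in
the normal form used by `pfaffian`, i.e. as the permutation `j₁ τ(j₁) j₂ τ(j₂) …` with
`j₁ < j₂ < ⋯` the elements of `J`. Among its inversions, pairs inside `J` contribute none and
pairs inside `K` contribute those of `τ`; a pair `{jₐ, τ(j_b)}` is inverted iff exactly one of
`b < a` and `τ(j_b) < jₐ` holds, so these pairs contribute `(-1)^(k choose 2) (-1)^inv(J, K)`.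
-/

open Finset Equiv Equiv.Perm Function

theorem Equiv.Perm.sign_eq_prod_ite_lt {n : ℕ} (σ : Perm (Fin n)) :
    sign σ = ∏ p, ∏ q, if p < q ∧ σ q < σ p then -1 else 1 := by
  rw [σ.sign_eq_prod_prod_Ioi]
  refine prod_congr rfl fun p _ => ?_
  rw [← filter_lt_eq_Ioi, prod_filter]
  refine prod_congr rfl fun q _ => ?_
  by_cases hpq : p < q
  · rcases (σ.injective.ne hpq.ne).lt_or_gt with h | h <;> simp [hpq, h, h.not_gt]
  · simp [hpq]

theorem Finset.prod_ite_neg_one {ι M : Type*} [CommMonoid M] [HasDistribNeg M]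
    (s : Finset ι) (p : ι → Prop) [DecidablePred p] :
    ∏ x ∈ s, (if p x then (-1 : M) else 1) = (-1) ^ #{x ∈ s | p x} := by
  rw [prod_ite, prod_const, prod_const_one, mul_one]

theorem Finset.prod_orderEmbOfFin {α M : Type*} [LinearOrder α] [CommMonoid M] {a : ℕ}
    (s : Finset α) (h : #s = a) (f : α → M) :
    ∏ i, f (s.orderEmbOfFin h i) = ∏ x ∈ s, f x :=
  (prod_map univ _ f).symm.trans (by rw [map_orderEmbOfFin_univ])

theorem Finset.powerset_map {α β : Type*} (f : α ↪ β) (s : Finset α) :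
    (s.map f).powerset = s.powerset.map (mapEmbedding f).toEmbedding := by
  classical
  ext t
  simp [map_eq_image, powerset_image]

theorem Finset.orderEmbOfFin_map {α β : Type*} [LinearOrder α] [LinearOrder β] (e : α ↪o β)
    (s : Finset α) {k : ℕ} (h : #(s.map e.toEmbedding) = k) :
    (s.map e.toEmbedding).orderEmbOfFin h = (s.orderEmbOfFin (by simpa using h)).trans e :=
  (orderEmbOfFin_unique' h fun i => mem_map_of_mem _ (orderEmbOfFin_mem _ _ i)).symm

theorem Finset.card_filter_lt_map_product {α β : Type*} [LinearOrder α] [LinearOrder β]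
    (e : α ↪o β) (J K : Finset α) :
    #{p ∈ J.map e.toEmbedding ×ˢ K.map e.toEmbedding | p.2 < p.1} =
      #{p ∈ J ×ˢ K | p.2 < p.1} := by
  rw [← prodMap_map_product, filter_map, card_map]
  simp [Function.comp_def]

theorem prod_prod_ite_lt_eq_neg_one_pow_choose (k : ℕ) :
    ∏ i : Fin k, ∏ j : Fin k, (if j < i then (-1 : ℤˣ) else 1) = (-1) ^ k.choose 2 := by
  simp only [prod_ite_neg_one, filter_gt_eq_Iio, Fin.card_Iio, prod_pow_eq_pow_sum,
    Fin.sum_univ_eq_sum_range (fun i => i), sum_range_id, Nat.choose_two_right]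

theorem prod_prod_ite_orderEmbOfFin_lt {α : Type*} [LinearOrder α] {a b : ℕ} (S T : Finset α)
    (hS : #S = a) (hT : #T = b) :
    ∏ i, ∏ j, (if T.orderEmbOfFin hT j < S.orderEmbOfFin hS i then (-1 : ℤˣ) else 1) =
      (-1) ^ #{p ∈ S ×ˢ T | p.2 < p.1} := by
  rw [← prod_ite_neg_one, prod_product, ← S.prod_orderEmbOfFin hS]
  simp only [← T.prod_orderEmbOfFin hT]

theorem ite_and_lt_mul_ite_and_lt {α β : Type*} [LinearOrder α] [LinearOrder β] {i j : α}
    {x y : β} (hxy : x ≠ y) :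
    (if j < i ∧ x < y then (-1 : ℤˣ) else 1) * (if i ≤ j ∧ y < x then -1 else 1) =
      (if j < i then -1 else 1) * (if y < x then -1 else 1) := by
  rcases hxy.lt_or_gt with hlt | hlt <;> rcases le_or_gt i j with hij | hij <;>
    simp [hlt, hlt.not_gt, hij, hij.not_gt]

def upperPart {α R : Type*} [LT α] [DecidableRel (α := α) (· < ·)] [Zero R]
    (Y : Matrix α α R) : Matrix α α R :=
  of fun a b => if a < b then Y a b else 0

theorem upperPart_submatrix {α β R : Type*} [LinearOrder α] [LinearOrder β] [Zero R]
    (e : α ↪o β) (Y : Matrix β β R) :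
    (upperPart Y).submatrix e e = upperPart (Y.submatrix e e) := by
  ext a b
  simp [upperPart]

noncomputable def splitMinorSum {α R : Type*} [LinearOrder α] [CommRing R] (k : ℕ)
    (I : Finset α) (X : Matrix α α R) : R :=
  ∑ J ∈ I.powerset,
    if h : #J = k ∧ #(I \ J) = k then
      (-1 : R) ^ (k.choose 2 + #{p ∈ J ×ˢ (I \ J) | p.2 < p.1}) *
        (X.submatrix (J.orderEmbOfFin h.1) ((I \ J).orderEmbOfFin h.2)).det
    else 0

theorem splitMinorSum_map {α β R : Type*} [LinearOrder α] [LinearOrder β] [CommRing R] (k : ℕ)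
    (e : α ↪o β) (I : Finset α) (X : Matrix β β R) :
    splitMinorSum k (I.map e.toEmbedding) X = splitMinorSum k I (X.submatrix e e) := by
  rw [splitMinorSum, powerset_map, sum_map]
  refine sum_congr rfl fun J _ => ?_
  simp only [RelEmbedding.coe_toEmbedding, mapEmbedding_apply, ← Finset.map_sdiff, card_map,
    card_filter_lt_map_product, orderEmbOfFin_map]
  rfl

namespace Pfaffian

variable {k : ℕ}

def pairFst (i : Fin k) : Fin (2 * k) := ⟨2 * i, by omega⟩

def pairSnd (i : Fin k) : Fin (2 * k) := ⟨2 * i + 1, by omega⟩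

@[simp] lemma val_pairFst (i : Fin k) : (pairFst i : ℕ) = 2 * i := rfl

@[simp] lemma val_pairSnd (i : Fin k) : (pairSnd i : ℕ) = 2 * i + 1 := rfl

@[simp] lemma pairFst_lt_pairFst {i j : Fin k} : pairFst i < pairFst j ↔ i < j := by
  simp only [Fin.lt_def, val_pairFst]; omega

@[simp] lemma pairFst_lt_pairSnd {i j : Fin k} : pairFst i < pairSnd j ↔ i ≤ j := by
  simp only [Fin.lt_def, Fin.le_def, val_pairFst, val_pairSnd]; omega

@[simp] lemma pairSnd_lt_pairFst {i j : Fin k} : pairSnd i < pairFst j ↔ i < j := by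
  simp only [Fin.lt_def, val_pairFst, val_pairSnd]; omega

@[simp] lemma pairSnd_lt_pairSnd {i j : Fin k} : pairSnd i < pairSnd j ↔ i < j := by
  simp only [Fin.lt_def, val_pairSnd]; omega

lemma pairFst_injective : Injective (pairFst (k := k)) := fun i j h => by
  have := congrArg Fin.val h; simp only [val_pairFst] at this; omega

lemma pairSnd_injective : Injective (pairSnd (k := k)) := fun i j h => by
  have := congrArg Fin.val h; simp only [val_pairSnd] at this; omega

lemma pairFst_ne_pairSnd (i j : Fin k) : pairFst i ≠ pairSnd j := fun h => by
  have := congrArg Fin.val h; simp only [val_pairFst, val_pairSnd] at this; omega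

noncomputable def sumElimEquiv (g f : Fin k → Fin (2 * k)) (hg : Injective g)
    (hf : Injective f) (hgf : ∀ i j, g i ≠ f j) : Fin k ⊕ Fin k ≃ Fin (2 * k) :=
  Equiv.ofBijective (Sum.elim g f)
    ((Fintype.bijective_iff_injective_and_card _).2 ⟨hg.sumElim hf hgf, by simp [two_mul]⟩)

@[simp] lemma sumElimEquiv_apply (g f : Fin k → Fin (2 * k)) (hg : Injective g)
    (hf : Injective f) (hgf : ∀ i j, g i ≠ f j) (u : Fin k ⊕ Fin k) :
    sumElimEquiv g f hg hf hgf u = Sum.elim g f u := rfl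

noncomputable def interleave : Fin k ⊕ Fin k ≃ Fin (2 * k) :=
  sumElimEquiv pairFst pairSnd pairFst_injective pairSnd_injective pairFst_ne_pairSnd

@[simp] lemma interleave_inl (i : Fin k) : interleave (.inl i) = pairFst i := rfl
@[simp] lemma interleave_inr (i : Fin k) : interleave (.inr i) = pairSnd i := rfl

lemma perm_ext {σ σ' : Perm (Fin (2 * k))} (hfst : ∀ i, σ (pairFst i) = σ' (pairFst i))
    (hsnd : ∀ i, σ (pairSnd i) = σ' (pairSnd i)) : σ = σ' := by
  ext1 p
  obtain ⟨u | u, rfl⟩ := interleave.surjective p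
  exacts [hfst u, hsnd u]

lemma orderEmbOfFin_ne_orderEmbOfFin_sdiff {S : Finset (Fin (2 * k))}
    (h : #S = k ∧ #(univ \ S) = k) (i j : Fin k) :
    S.orderEmbOfFin h.1 i ≠ (univ \ S).orderEmbOfFin h.2 j := fun hij =>
  (mem_sdiff.1 ((univ \ S).orderEmbOfFin_mem h.2 j)).2 (hij ▸ S.orderEmbOfFin_mem h.1 i)

/-- The matching pairing the `i`-th element of `S` with the `τ i`-th element of `univ \ S`, as
a permutation in the format of `pfaffian`: pair `i` sits at positions `2i` and `2i + 1`. -/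
noncomputable def matchingPerm (S : Finset (Fin (2 * k))) (h : #S = k ∧ #(univ \ S) = k)
    (τ : Perm (Fin k)) : Perm (Fin (2 * k)) :=
  interleave.symm.trans <| sumElimEquiv (S.orderEmbOfFin h.1) ((univ \ S).orderEmbOfFin h.2 ∘ τ)
    (S.orderEmbOfFin h.1).injective (((univ \ S).orderEmbOfFin h.2).injective.comp τ.injective)
    (fun i j => orderEmbOfFin_ne_orderEmbOfFin_sdiff h i (τ j))

variable {S : Finset (Fin (2 * k))} (h : #S = k ∧ #(univ \ S) = k) (τ : Perm (Fin k))

@[simp] lemma matchingPerm_interleave (u : Fin k ⊕ Fin k) :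
    matchingPerm S h τ (interleave u) =
      Sum.elim (S.orderEmbOfFin h.1) ((univ \ S).orderEmbOfFin h.2 ∘ τ) u := by
  simp [matchingPerm]

@[simp] lemma matchingPerm_pairFst (i : Fin k) :
    matchingPerm S h τ (pairFst i) = S.orderEmbOfFin h.1 i :=
  matchingPerm_interleave h τ (.inl i)

@[simp] lemma matchingPerm_pairSnd (i : Fin k) :
    matchingPerm S h τ (pairSnd i) = (univ \ S).orderEmbOfFin h.2 (τ i) :=
  matchingPerm_interleave h τ (.inr i)

theorem sign_matchingPerm : sign (matchingPerm S h τ) =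
    (-1) ^ (k.choose 2 + #{p ∈ S ×ˢ (univ \ S) | p.2 < p.1}) * sign τ := by
  rw [sign_eq_prod_ite_lt, ← interleave.prod_comp]
  simp only [← interleave.prod_comp (fun q => ite _ _ _)]
  simp only [Fintype.prod_sum_type, matchingPerm_interleave, interleave_inl, interleave_inr,
    Sum.elim_inl, Sum.elim_inr, Function.comp_apply, pairFst_lt_pairFst, pairFst_lt_pairSnd,
    pairSnd_lt_pairFst, pairSnd_lt_pairSnd, OrderEmbedding.lt_iff_lt, prod_mul_distrib]
  rw [prod_eq_one fun i _ => prod_eq_one fun j _ => if_neg fun hij => lt_asymm hij.1 hij.2,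
    one_mul, prod_comm, ← sign_eq_prod_ite_lt, ← mul_assoc, ← prod_mul_distrib]
  simp only [← prod_mul_distrib,
    ite_and_lt_mul_ite_and_lt (orderEmbOfFin_ne_orderEmbOfFin_sdiff h _ _)]
  simp only [prod_mul_distrib]
  rw [prod_prod_ite_lt_eq_neg_one_pow_choose, prod_congr rfl fun i _ => Equiv.prod_comp τ
      fun j => if (univ \ S).orderEmbOfFin h.2 j < S.orderEmbOfFin h.1 i then -1 else 1,
    prod_prod_ite_orderEmbOfFin_lt, pow_add]

lemma image_matchingPerm_pairFst : univ.image (fun i => matchingPerm S h τ (pairFst i)) = S := by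
  simp only [matchingPerm_pairFst, image_orderEmbOfFin_univ]

lemma matchingPerm_injective {S' : Finset (Fin (2 * k))} {h' : #S' = k ∧ #(univ \ S') = k}
    {τ' : Perm (Fin k)} (heq : matchingPerm S h τ = matchingPerm S' h' τ') :
    S = S' ∧ τ = τ' := by
  obtain rfl : S = S' := by
    rw [← image_matchingPerm_pairFst h τ, heq, image_matchingPerm_pairFst]
  refine ⟨rfl, Equiv.ext fun i => ((univ \ S).orderEmbOfFin h.2).injective ?_⟩
  simpa using DFunLike.congr_fun heq (pairSnd i)

lemma exists_matchingPerm_eq (σ : Perm (Fin (2 * k)))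
    (hσ : ∀ i j, i < j → σ (pairFst i) < σ (pairFst j)) :
    ∃ (S : Finset (Fin (2 * k))) (h : #S = k ∧ #(univ \ S) = k) (τ : Perm (Fin k)),
      matchingPerm S h τ = σ := by
  have hmono : StrictMono (σ ∘ pairFst) := fun i j => hσ i j
  set S := univ.image (σ ∘ pairFst)
  have hS : #S = k := by
    rw [card_image_of_injective _ hmono.injective, card_univ, Fintype.card_fin]
  have h : #S = k ∧ #(univ \ S) = k :=
    ⟨hS, by rw [card_univ_sdiff, Fintype.card_fin, hS]; omega⟩
  have hfst : σ ∘ pairFst = S.orderEmbOfFin h.1 :=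
    orderEmbOfFin_unique h.1 (fun i => mem_image_of_mem _ (mem_univ i)) hmono
  have hsnd (i : Fin k) : σ (pairSnd i) ∈ Set.range ((univ \ S).orderEmbOfFin h.2) := by
    rw [range_orderEmbOfFin, coe_sdiff, coe_univ, Set.mem_sdiff, mem_coe, mem_image]
    exact ⟨trivial, fun ⟨j, _, hj⟩ => pairFst_ne_pairSnd j i (σ.injective hj)⟩
  choose t ht using hsnd
  have ht_inj : Injective t := fun i j hij =>
    pairSnd_injective (σ.injective (by rw [← ht, ← ht, hij]))
  refine ⟨S, h, Equiv.ofBijective t ht_inj.bijective_of_finite,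
    perm_ext (fun i => ?_) fun i => ?_⟩
  · simp [← hfst]
  · simp [ht]

lemma neg_one_pow_mul_sign_mul_prod_upperPart {R : Type*} [CommRing R]
    (Z : Matrix (Fin (2 * k)) (Fin (2 * k)) R) :
    (-1 : R) ^ (k.choose 2 + #{p ∈ S ×ˢ (univ \ S) | p.2 < p.1}) *
        (((sign τ : ℤ) : R) *
          ∏ i, upperPart Z (S.orderEmbOfFin h.1 i) ((univ \ S).orderEmbOfFin h.2 (τ i))) =
      if (∀ i, matchingPerm S h τ (pairFst i) < matchingPerm S h τ (pairSnd i)) ∧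
          ∀ i j, i < j → matchingPerm S h τ (pairFst i) < matchingPerm S h τ (pairFst j) then
        ((sign (matchingPerm S h τ) : ℤ) : R) *
          ∏ i, Z (matchingPerm S h τ (pairFst i)) (matchingPerm S h τ (pairSnd i))
      else 0 := by
  simp only [matchingPerm_pairFst, matchingPerm_pairSnd, OrderEmbedding.lt_iff_lt, imp_self,
    implies_true, and_true]
  split_ifs with hcompat
  · simp only [sign_matchingPerm, upperPart, of_apply, if_pos (hcompat _)]
    push_cast
    ring
  · obtain ⟨i, hi⟩ := not_forall.1 hcompat
    rw [prod_eq_zero (mem_univ i) (by simp [upperPart, hi]), mul_zero, mul_zero]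

end Pfaffian

open Pfaffian in
theorem splitMinorSum_univ_upperPart {R : Type*} [CommRing R] {k : ℕ}
    (Z : Matrix (Fin (2 * k)) (Fin (2 * k)) R) :
    splitMinorSum k univ (upperPart Z) = pfaffian Z := by
  rw [splitMinorSum, sum_dite]
  simp only [sum_const_zero, add_zero, ← det_transpose (submatrix _ _ _), det_apply',
    transpose_apply, submatrix_apply, mul_sum]
  rw [← Fintype.sum_prod_type', pfaffian, sum_filter]
  refine Fintype.sum_of_injective
    (fun x : {S ∈ (univ : Finset (Fin (2 * k))).powerset | #S = k ∧ #(univ \ S) = k} ×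
      Perm (Fin k) => matchingPerm x.1.1 (mem_filter.1 x.1.2).2 x.2) ?_ _ _
    (fun σ hσ => if_neg ?_) fun x => neg_one_pow_mul_sign_mul_prod_upperPart _ x.2 Z
  · rintro ⟨⟨S, hS⟩, τ⟩ ⟨⟨S', hS'⟩, τ'⟩ heq
    obtain ⟨rfl, rfl⟩ := matchingPerm_injective _ _ heq
    rfl
  · rintro ⟨-, hmono⟩
    obtain ⟨S, h, τ, rfl⟩ := exists_matchingPerm_eq σ hmono
    exact hσ ⟨(⟨S, mem_filter.2 ⟨mem_powerset.2 (subset_univ S), h⟩⟩, τ), rfl⟩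

theorem sum_det_upper_eq_pf_general {R : Type*} [CommRing R] (k n : ℕ)
    (I : Finset (Fin n)) (hI : I.card = 2*k)
    (Y : Matrix (Fin n) (Fin n) R) :
    (∑ J ∈ I.powerset,
        if h : J.card = k ∧ (I \ J).card = k then
          (-1 : R)^(Nat.choose k 2 + ((J ×ˢ (I \ J)).filter fun p => p.2 < p.1).card) *
            ((Matrix.of fun a b : Fin n => if a < b then Y a b else 0).submatrix
              (J.orderEmbOfFin h.1) ((I \ J).orderEmbOfFin h.2)).det
        else 0)
      = pfaffian (Y.submatrix (I.orderEmbOfFin hI) (I.orderEmbOfFin hI)) := by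
  have hmap := splitMinorSum_map k (I.orderEmbOfFin hI) univ (upperPart Y)
  rw [map_orderEmbOfFin_univ, upperPart_submatrix, splitMinorSum_univ_upperPart] at hmap
  exact hmap

/-- Lemma: let `I ⊆ [n]` with `|I| = m = 2k`, `Y` a skew-symmetric `n × n` matrix and
`X` the upper triangular matrix with `X_{i,j} = Y_{i,j}` for `i < j` and `X_{i,j} = 0`
otherwise. Then `Σ_{J∪K=I, J∩K=∅, |J|=|K|=k} (−1)^{binom(k,2)+inv(JK)} det(X_{J,K})
= Pf(Y_{I,I})`, where `inv(JK)` is the number of pairs `(j,κ) ∈ J×K` with `j > κ`.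
(The pairs `(J,K)` are parametrised by the subsets `J ⊆ I`, with `K = I \ J`.) -/
theorem sum_det_upper_eq_pf {R : Type*} [CommRing R] (k n : ℕ) (hk : 0 < k)
    (I : Finset (Fin n)) (hI : I.card = 2*k)
    (Y : Matrix (Fin n) (Fin n) R) (hY : Yᵀ = -Y) (hdiag : ∀ i, Y i i = 0) :
    (∑ J ∈ I.powerset,
        if h : J.card = k ∧ (I \ J).card = k then
          (-1 : R)^(Nat.choose k 2 + ((J ×ˢ (I \ J)).filter fun p => p.2 < p.1).card) *
            ((Matrix.of fun a b : Fin n => if a < b then Y a b else 0).submatrix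
              (J.orderEmbOfFin h.1) ((I \ J).orderEmbOfFin h.2)).det
        else 0)
      = pfaffian (Y.submatrix (I.orderEmbOfFin hI) (I.orderEmbOfFin hI)) :=
  sum_det_upper_eq_pf_general k n I hI Y
end

section
/- Let n and ℓ be positive integers, and let X be an n×n matrix over a commutative ring with X_{i,j} = 1 for 1 ≤ i < j ≤ n and X_{i,j} = 0 for i > j (arbitrary diagonal entries). Let I = {i_1 < i_2 < … < i_ℓ} and J = {j_1 < j_2 < … < j_ℓ} be subsets of [n]. Then det(X_{I,J}) = ∏_{k=1}^{ℓ} X_{i_k,i_k}^{χ(i_k = j_k)} · (1 − X_{i_k,i_k})^{χ(j_{k−1} = i_k)} if 1 ≤ i_1 ≤ j_1 ≤ i_2 ≤ j_2 ≤ … ≤ i_ℓ ≤ j_ℓ ≤ n, and det(X_{I,J}) = 0 otherwise, where by convention j_0 = 0. -/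
/-!
Induction on `ℓ`, peeling off the last row `i_ℓ` and the last column `j_ℓ` of `X_{I,J}`.
If `j_ℓ < i_ℓ` the last row vanishes. If `i_ℓ < j_{ℓ-1}`, the last two columns consist of ones.
If `j_{ℓ-1} < i_ℓ ≤ j_ℓ`, the last row is zero except for its last entry `X_{i_ℓ,j_ℓ}`.
If `j_{ℓ-1} = i_ℓ`, subtracting column `ℓ-1` from column `ℓ` leaves `(0, …, 0, 1 - X_{i_ℓ,i_ℓ})`.
-/

open Matrix

namespace Matrix

variable {R : Type*} [CommRing R] {m : ℕ}

theorem det_succ_of_row_last_eq_zero (A : Matrix (Fin (m + 1)) (Fin (m + 1)) R)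
    (h : ∀ j, j ≠ Fin.last m → A (Fin.last m) j = 0) :
    A.det = A (Fin.last m) (Fin.last m) * (A.submatrix Fin.castSucc Fin.castSucc).det := by
  rw [det_succ_row A (Fin.last m), Finset.sum_eq_single (Fin.last m)
      (fun j _ hj => by rw [h j hj, mul_zero, zero_mul]) (by simp),
    Fin.succAbove_last, (Even.add_self _).neg_one_pow, one_mul]

theorem det_succ_of_col_last_eq_zero (A : Matrix (Fin (m + 1)) (Fin (m + 1)) R)
    (h : ∀ i, i ≠ Fin.last m → A i (Fin.last m) = 0) :
    A.det = A (Fin.last m) (Fin.last m) * (A.submatrix Fin.castSucc Fin.castSucc).det := by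
  rw [← det_transpose, det_succ_of_row_last_eq_zero Aᵀ h, ← transpose_submatrix, det_transpose,
    transpose_apply]

end Matrix

section Interlacing

variable {ι R : Type*} [LinearOrder ι] [CommRing R] {ℓ : ℕ}

def Interlaced (fI fJ : Fin ℓ → ι) : Prop :=
  (∀ t : Fin ℓ, fI t ≤ fJ t) ∧ (∀ s t : Fin ℓ, (s:ℕ) + 1 = (t:ℕ) → fJ s ≤ fI t)

instance (fI fJ : Fin ℓ → ι) : Decidable (Interlaced fI fJ) :=
  inferInstanceAs (Decidable (_ ∧ _))

def interlacingWeight (X : Matrix ι ι R) (fI fJ : Fin ℓ → ι) (t : Fin ℓ) : R :=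
  (if fI t = fJ t then X (fI t) (fI t) else 1) *
    (if _ : (t:ℕ) = 0 then 1
     else if fJ ⟨(t:ℕ) - 1, tsub_lt_of_lt t.isLt⟩ = fI t then
       1 - X (fI t) (fI t)
     else 1)

def interlacedMinor (X : Matrix ι ι R) (fI fJ : Fin ℓ → ι) : R :=
  if Interlaced fI fJ then ∏ t, interlacingWeight X fI fJ t else 0

theorem interlaced_succ_succ_iff {m : ℕ} {fI fJ : Fin (m + 2) → ι} :
    Interlaced fI fJ ↔ Interlaced (Fin.init fI) (Fin.init fJ) ∧
      fI (Fin.last _) ≤ fJ (Fin.last _) ∧ fJ (Fin.last m).castSucc ≤ fI (Fin.last _) := by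
  constructor
  · rintro ⟨hle, hsucc⟩
    exact ⟨⟨fun t => hle _, fun s t hst => hsucc _ _ hst⟩, hle _, hsucc _ _ (by simp)⟩
  · rintro ⟨⟨hle, hsucc⟩, hlast, hprev⟩
    refine ⟨Fin.lastCases hlast hle, fun s t hst => ?_⟩
    induction t using Fin.lastCases with
    | last =>
      obtain rfl : s = (Fin.last m).castSucc := Fin.ext (by simp at hst ⊢; omega)
      exact hprev
    | cast t =>
      obtain ⟨s, rfl⟩ : ∃ s' : Fin (m + 1), s = s'.castSucc :=
        ⟨⟨s, by simp at hst; omega⟩, rfl⟩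
      exact hsucc s t hst

theorem interlacingWeight_castSucc (X : Matrix ι ι R) (fI fJ : Fin (ℓ + 1) → ι) (t : Fin ℓ) :
    interlacingWeight X fI fJ t.castSucc = interlacingWeight X (Fin.init fI) (Fin.init fJ) t :=
  rfl

theorem interlacingWeight_last {m : ℕ} (X : Matrix ι ι R) (fI fJ : Fin (m + 2) → ι) :
    interlacingWeight X fI fJ (Fin.last _) =
      (if fI (Fin.last _) = fJ (Fin.last _) then X (fI (Fin.last _)) (fI (Fin.last _)) else 1) *
        (if fJ (Fin.last m).castSucc = fI (Fin.last _) then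
          1 - X (fI (Fin.last _)) (fI (Fin.last _)) else 1) :=
  rfl

theorem interlacedMinor_succ_succ {m : ℕ} (X : Matrix ι ι R) (fI fJ : Fin (m + 2) → ι) :
    interlacedMinor X fI fJ =
      (if fI (Fin.last _) ≤ fJ (Fin.last _) ∧ fJ (Fin.last m).castSucc ≤ fI (Fin.last _) then
        interlacingWeight X fI fJ (Fin.last _) else 0) *
      interlacedMinor X (Fin.init fI) (Fin.init fJ) := by
  rw [interlacedMinor, interlacedMinor, Fin.prod_univ_castSucc]
  simp only [interlacingWeight_castSucc]
  by_cases hlast : fI (Fin.last _) ≤ fJ (Fin.last _) ∧ fJ (Fin.last m).castSucc ≤ fI (Fin.last _)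
  · by_cases hinit : Interlaced (Fin.init fI) (Fin.init fJ)
    · rw [if_pos (interlaced_succ_succ_iff.mpr ⟨hinit, hlast⟩), if_pos hlast, if_pos hinit, mul_comm]
    · rw [if_neg (mt (fun h => (interlaced_succ_succ_iff.mp h).1) hinit), if_neg hinit, mul_zero]
  · rw [if_neg (mt (fun h => (interlaced_succ_succ_iff.mp h).2) hlast), if_neg hlast, zero_mul]

theorem entry_eq_ite_of_le {X : Matrix ι ι R} (hXu : ∀ i j, i < j → X i j = 1) {i j : ι}
    (h : i ≤ j) : X i j = if i = j then X i i else 1 := by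
  split_ifs with hij
  · rw [hij]
  · exact hXu i j (h.lt_of_ne hij)

variable {X : Matrix ι ι R} {m : ℕ}

theorem det_submatrix_eq_zero_of_last_lt (hXl : ∀ i j, j < i → X i j = 0)
    {fI fJ : Fin (m + 1) → ι} (hfJ : Monotone fJ) (h : fJ (Fin.last m) < fI (Fin.last m)) :
    (X.submatrix fI fJ).det = 0 :=
  det_eq_zero_of_row_eq_zero (Fin.last m) fun t =>
    hXl _ _ ((hfJ (Fin.le_last t)).trans_lt h)

theorem det_submatrix_succ_of_prev_lt (hXl : ∀ i j, j < i → X i j = 0)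
    {fI fJ : Fin (m + 2) → ι} (hfJ : Monotone fJ)
    (h : fJ (Fin.last m).castSucc < fI (Fin.last _)) :
    (X.submatrix fI fJ).det =
      X (fI (Fin.last _)) (fJ (Fin.last _)) * (X.submatrix (Fin.init fI) (Fin.init fJ)).det := by
  refine det_succ_of_row_last_eq_zero _ fun t ht => hXl _ _ ((hfJ ?_).trans_lt h)
  exact Fin.le_castSucc_iff.mpr (Fin.lt_last_iff_ne_last.mpr ht)

theorem det_submatrix_eq_zero_of_last_lt_prev (hXu : ∀ i j, i < j → X i j = 1)
    {fI fJ : Fin (m + 2) → ι} (hfI : Monotone fI) (hfJ : StrictMono fJ)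
    (h : fI (Fin.last _) < fJ (Fin.last m).castSucc) :
    (X.submatrix fI fJ).det = 0 := by
  have hPL := Fin.castSucc_lt_last (Fin.last m)
  refine det_zero_of_column_eq hPL.ne fun k => ?_
  have hk := (hfI (Fin.le_last k)).trans_lt h
  simp only [submatrix_apply, hXu _ _ hk, hXu _ _ (hk.trans (hfJ hPL))]

theorem det_submatrix_succ_of_prev_eq (hXu : ∀ i j, i < j → X i j = 1)
    {fI fJ : Fin (m + 2) → ι} (hfI : StrictMono fI) (hfJ : StrictMono fJ)
    (h : fJ (Fin.last m).castSucc = fI (Fin.last _)) :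
    (X.submatrix fI fJ).det =
      (1 - X (fI (Fin.last _)) (fI (Fin.last _))) *
        (X.submatrix (Fin.init fI) (Fin.init fJ)).det := by
  have hPL := Fin.castSucc_lt_last (Fin.last m)
  have hlt : fI (Fin.last _) < fJ (Fin.last _) := h ▸ hfJ hPL
  rw [← det_updateCol_add_smul_self _ hPL.ne' (-1), det_succ_of_col_last_eq_zero]
  · congr 1
    · simp only [updateCol_self, submatrix_apply, hXu _ _ hlt, h, neg_one_smul, sub_eq_add_neg]
    · congr 1
      ext s t
      simp only [submatrix_apply, updateCol_ne (Fin.castSucc_lt_last t).ne]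
      rfl
  · intro s hs
    have hsP : fI s < fJ (Fin.last m).castSucc := h ▸ hfI (Fin.lt_last_iff_ne_last.mpr hs)
    simp only [updateCol_self, submatrix_apply, hXu _ _ hsP, hXu _ _ (hsP.trans (hfJ hPL)),
      neg_one_smul, add_neg_cancel]

theorem det_submatrix_succ_succ (hXu : ∀ i j, i < j → X i j = 1)
    (hXl : ∀ i j, j < i → X i j = 0) {fI fJ : Fin (m + 2) → ι} (hfI : StrictMono fI)
    (hfJ : StrictMono fJ) :
    (X.submatrix fI fJ).det =
      (if fI (Fin.last _) ≤ fJ (Fin.last _) ∧ fJ (Fin.last m).castSucc ≤ fI (Fin.last _) then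
        interlacingWeight X fI fJ (Fin.last _) else 0) *
      (X.submatrix (Fin.init fI) (Fin.init fJ)).det := by
  rw [interlacingWeight_last]
  rcases lt_or_ge (fJ (Fin.last _)) (fI (Fin.last _)) with hJI | hIJ
  · rw [det_submatrix_eq_zero_of_last_lt hXl hfJ.monotone hJI,
      if_neg fun h => hJI.not_ge h.1, zero_mul]
  rcases lt_trichotomy (fJ (Fin.last m).castSucc) (fI (Fin.last _)) with hPI | hPI | hIP
  · rw [det_submatrix_succ_of_prev_lt hXl hfJ.monotone hPI, if_pos ⟨hIJ, hPI.le⟩,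
      if_neg hPI.ne, mul_one, ← entry_eq_ite_of_le hXu hIJ]
  · have hIJ : fI (Fin.last _) < fJ (Fin.last _) := hPI ▸ hfJ (Fin.castSucc_lt_last _)
    rw [det_submatrix_succ_of_prev_eq hXu hfI hfJ hPI, if_pos ⟨hIJ.le, hPI.le⟩, if_neg hIJ.ne,
      if_pos hPI, one_mul]
  · rw [det_submatrix_eq_zero_of_last_lt_prev hXu hfI.monotone hfJ hIP,
      if_neg fun h => hIP.not_ge h.2, zero_mul]

theorem det_submatrix_eq_interlacedMinor (hXu : ∀ i j, i < j → X i j = 1)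
    (hXl : ∀ i j, j < i → X i j = 0) :
    ∀ {ℓ : ℕ} {fI fJ : Fin ℓ → ι}, StrictMono fI → StrictMono fJ →
      (X.submatrix fI fJ).det = interlacedMinor X fI fJ
  | 0, _, _, _, _ => by simp [interlacedMinor, Interlaced]
  | 1, fI, fJ, _, _ => by
    simp only [det_unique, Fin.default_eq_zero, submatrix_apply, interlacedMinor, Interlaced,
      Fin.forall_fin_one, Fin.val_eq_zero, zero_add, one_ne_zero, IsEmpty.forall_iff,
      implies_true, and_true, Finset.univ_unique, interlacingWeight, ↓reduceDIte, mul_one,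
      Finset.prod_singleton]
    rcases le_or_gt (fI 0) (fJ 0) with h | h
    · rw [if_pos h, ← entry_eq_ite_of_le hXu h]
    · rw [if_neg h.not_ge, hXl _ _ h]
  | m + 2, fI, fJ, hfI, hfJ => by
    rw [det_submatrix_succ_succ hXu hXl hfI hfJ, interlacedMinor_succ_succ,
      det_submatrix_eq_interlacedMinor hXu hXl (fI := Fin.init fI) (fJ := Fin.init fJ)
        (hfI.comp Fin.strictMono_castSucc) (hfJ.comp Fin.strictMono_castSucc)]

end Interlacing

/-- Lemma: let `X` be an `n × n` matrix with `X_{i,j} = 1` for `i < j` and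
`X_{i,j} = 0` for `i > j` (arbitrary diagonal), and let `I = {i_1 < … < i_ℓ}` and
`J = {j_1 < … < j_ℓ}` be subsets of `[n]`, encoded by the strictly increasing
functions `fI, fJ : Fin ℓ → Fin n`. Then `det(X_{I,J})` equals
`∏_k X_{i_k,i_k}^{χ(i_k=j_k)} (1−X_{i_k,i_k})^{χ(j_{k−1}=i_k)}` if
`i_1 ≤ j_1 ≤ i_2 ≤ j_2 ≤ … ≤ i_ℓ ≤ j_ℓ`, and `0` otherwise (with the convention
`j_0 = 0`, so that the factor `(1−X_{i_1,i_1})^{χ(j_0=i_1)}` never appears). -/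
theorem det_submatrix_upper_unitriangular {R : Type*} [CommRing R] (n ℓ : ℕ)
    (X : Matrix (Fin n) (Fin n) R)
    (hXu : ∀ i j : Fin n, i < j → X i j = 1) (hXl : ∀ i j : Fin n, j < i → X i j = 0)
    (fI fJ : Fin ℓ → Fin n) (hfI : StrictMono fI) (hfJ : StrictMono fJ) :
    (X.submatrix fI fJ).det =
      if (∀ t : Fin ℓ, fI t ≤ fJ t) ∧
          (∀ s t : Fin ℓ, (s:ℕ) + 1 = (t:ℕ) → fJ s ≤ fI t) then
        ∏ t : Fin ℓ,
          (if fI t = fJ t then X (fI t) (fI t) else 1) *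
            (if h0 : (t:ℕ) = 0 then 1
             else if fJ ⟨(t:ℕ) - 1, by have := t.isLt; omega⟩ = fI t then
               1 - X (fI t) (fI t)
             else 1)
      else 0 :=
  det_submatrix_eq_interlacedMinor hXu hXl hfI hfJ
end

section
/- Let n and ℓ be positive integers, and let X be an n×n matrix over a commutative ring with X_{i,j} = 1 for 1 ≤ i < j ≤ n and X_{i,j} = 0 for i > j (arbitrary diagonal entries). Let I = {i_1 < i_2 < … < i_{ℓ+1}} and J = {j_1 < j_2 < … < j_ℓ} be subsets of [n], and let 𝟏 denote a column of ℓ+1 entries equal to 1. Then det(𝟏 X_{I,J}) = (−1)^ℓ · ∏_{k=1}^{ℓ} X_{i_k,i_k}^{χ(i_k = j_k)} · (1 − X_{i_{k+1},i_{k+1}})^{χ(j_k = i_{k+1})} if 1 ≤ i_1 ≤ j_1 ≤ i_2 ≤ … ≤ j_ℓ ≤ i_{ℓ+1} ≤ n, and det(𝟏 X_{I,J}) = 0 otherwise. -/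
/-!
Subtracting from each row of `(𝟏 X_{I,J})` the row above it turns the first column into the
first unit vector, so the determinant is that of the `ℓ × ℓ` matrix
`N_{s,t} = X_{i_{s+1},j_t} - X_{i_s,j_t}`. Because `X` has ones above and zeros below its
diagonal, `N_{s,t}` vanishes unless `i_s ≤ j_t ≤ i_{s+1}`. These intervals follow each other, so a
permutation `σ` with `N_{σ t,t} ≠ 0` for all `t` is monotone, hence the identity: `det N` is the
product of the diagonal entries of `N`, which are read off case by case.
-/

open Matrix Equiv

theorem Matrix.det_eq_prod_diag_of_perm_eq_one {n R : Type*} [Fintype n] [DecidableEq n]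
    [CommRing R] {M : Matrix n n R} (h : ∀ σ : Perm n, (∀ i, M (σ i) i ≠ 0) → σ = 1) :
    M.det = ∏ i, M i i := by
  rw [det_apply, Finset.sum_eq_single 1 (fun σ _ hσ => ?_) (by simp)]
  · simp
  · obtain ⟨i, hi⟩ : ∃ i, M (σ i) i = 0 := by
      by_contra! hne
      exact hσ (h σ hne)
    rw [Finset.prod_eq_zero (f := fun j => M (σ j) j) (Finset.mem_univ i) hi, smul_zero]

theorem Matrix.det_vecCons_one_eq_det_succ_sub_castSucc {R : Type*} [CommRing R] {ℓ : ℕ}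
    (A : Matrix (Fin (ℓ + 1)) (Fin ℓ) R) :
    (of fun i => vecCons (1 : R) (A i)).det =
      (of fun s t => A s.succ t - A s.castSucc t).det := by
  let B : Matrix (Fin (ℓ + 1)) (Fin (ℓ + 1)) R :=
    of fun i => Fin.cases (vecCons 1 (A 0)) (fun s => vecCons 0 (A s.succ - A s.castSucc)) i
  rw [det_eq_of_forall_row_eq_smul_add_pred (B := B) (fun _ => 1) (fun j => by simp [B])
    (fun s j => by refine Fin.cases ?_ (fun t => ?_) j <;> simp [B]),
    det_succ_column_zero, Fin.sum_univ_succ, Finset.sum_eq_zero (fun s _ => by simp [B])]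
  simp only [Fin.val_zero, pow_zero, Fin.succAbove_zero, add_zero, one_mul]
  exact one_mul _

theorem Equiv.Perm.eq_one_of_interlacing {α : Type*} [LinearOrder α] {ℓ : ℕ}
    {a : Fin (ℓ + 1) → α} {b : Fin ℓ → α} (ha : Monotone a) (hb : StrictMono b) {σ : Perm (Fin ℓ)}
    (h : ∀ s, a (σ s).castSucc ≤ b s ∧ b s ≤ a (σ s).succ) : σ = 1 := by
  have hσ : StrictMono σ := fun s s' hss' => by
    by_contra! hle
    have hlt : σ s' < σ s := hle.lt_of_ne (σ.injective.ne hss'.ne')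
    have hgap : a (σ s').succ ≤ a (σ s).castSucc := ha (Fin.succ_le_castSucc_iff.2 hlt)
    exact (hb hss').not_ge ((h s').2.trans (hgap.trans (h s).1))
  exact Equiv.ext fun s => hσ.apply_eq

theorem sub_eq_ite_of_ones_above_zeros_below {ι R : Type*} [LinearOrder ι] [CommRing R]
    {X : Matrix ι ι R} (hXu : ∀ i j, i < j → X i j = 1) (hXl : ∀ i j, j < i → X i j = 0)
    {i i' j : ι} (hii' : i < i') :
    X i' j - X i j = if i ≤ j ∧ j ≤ i' then
      -((if i = j then X i i else 1) * (if j = i' then 1 - X i' i' else 1)) else 0 := by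
  rcases lt_or_ge j i with hji | hij
  · simp [hXl _ _ hji, hXl _ _ (hji.trans hii'), hji.not_ge]
  rcases lt_or_ge i' j with hi'j | hji'
  · simp [hXu _ _ hi'j, hXu _ _ (hii'.trans hi'j), hi'j.not_ge]
  rcases hij.eq_or_lt with rfl | hij
  · simp [hXl _ _ hii', hii'.ne, hii'.le]
  rcases hji'.eq_or_lt with rfl | hji'
  · simp [hXu _ _ hij, hij.ne, hij.le]
  · simp [hXu _ _ hij, hXl _ _ hji', hij.ne, hji'.ne, hij.le, hji'.le]

/-- Lemma: let `X` be an `n × n` matrix with `X_{i,j} = 1` for `i < j` and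
`X_{i,j} = 0` for `i > j` (arbitrary diagonal), and let `I = {i_1 < … < i_{ℓ+1}}` and
`J = {j_1 < … < j_ℓ}` be subsets of `[n]`, encoded by the strictly increasing
functions `fI : Fin (ℓ+1) → Fin n` and `fJ : Fin ℓ → Fin n`. Then
`det(𝟏 X_{I,J})`, where an all-ones column is prepended to `X_{I,J}`, equals
`(−1)^ℓ ∏_k X_{i_k,i_k}^{χ(i_k=j_k)} (1−X_{i_{k+1},i_{k+1}})^{χ(j_k=i_{k+1})}` if
`i_1 ≤ j_1 ≤ i_2 ≤ … ≤ j_ℓ ≤ i_{ℓ+1}`, and `0` otherwise. -/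
theorem det_one_submatrix_upper_unitriangular {R : Type*} [CommRing R] (n ℓ : ℕ)
    (X : Matrix (Fin n) (Fin n) R)
    (hXu : ∀ i j : Fin n, i < j → X i j = 1) (hXl : ∀ i j : Fin n, j < i → X i j = 0)
    (fI : Fin (ℓ+1) → Fin n) (fJ : Fin ℓ → Fin n)
    (hfI : StrictMono fI) (hfJ : StrictMono fJ) :
    (Matrix.of fun i j : Fin (ℓ+1) =>
        if h : (j:ℕ) = 0 then (1 : R)
        else X (fI i) (fJ ⟨(j:ℕ) - 1, by have := j.isLt; omega⟩)).det =
      if ∀ t : Fin ℓ, fI t.castSucc ≤ fJ t ∧ fJ t ≤ fI t.succ then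
        (-1 : R)^ℓ *
          ∏ t : Fin ℓ,
            (if fI t.castSucc = fJ t then X (fI t.castSucc) (fI t.castSucc) else 1) *
              (if fJ t = fI t.succ then 1 - X (fI t.succ) (fI t.succ) else 1)
      else 0 := by
  have hcons : (Matrix.of fun i j : Fin (ℓ+1) =>
      if _ : (j:ℕ) = 0 then (1 : R)
      else X (fI i) (fJ ⟨(j:ℕ) - 1, by have := j.isLt; omega⟩)) =
      of fun i => vecCons 1 (X.submatrix fI fJ i) := by
    ext i j
    refine Fin.cases ?_ (fun t => ?_) j <;> simp
  have hrow (s t : Fin ℓ) := sub_eq_ite_of_ones_above_zeros_below hXu hXl (j := fJ t)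
    (hfI (Fin.castSucc_lt_succ (i := s)))
  rw [hcons, det_vecCons_one_eq_det_succ_sub_castSucc, det_eq_prod_diag_of_perm_eq_one]
  · simp only [of_apply, submatrix_apply, hrow, Fintype.prod_ite_zero, Finset.prod_neg,
      Finset.card_univ, Fintype.card_fin]
  · refine fun σ hσ => Perm.eq_one_of_interlacing hfI.monotone hfJ fun s => ?_
    by_contra hs
    exact hσ s (by rw [of_apply, submatrix_apply, submatrix_apply, hrow, if_neg hs])
end

section
/- Let m and n be positive integers with m even, and let A and B be m×n matrices over a commutative ring. Then Σ_{1≤i_1<j_1≤i_2<j_2≤⋯≤i_{m/2}<j_{m/2}≤n} det(A^{i_1} B^{j_1} A^{i_2} B^{j_2} ⋯ A^{i_{m/2}} B^{j_{m/2}}) = Pf(A·U_n·Bᵗ − B·U_nᵗ·Aᵗ). -/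
open Matrix

/-- The `n × n` strictly upper triangular matrix `U_n` with all entries above the
diagonal equal to `1` and all other entries equal to `0`. -/
def upperTri (R : Type*) [CommRing R] (n : ℕ) : Matrix (Fin n) (Fin n) R :=
  Matrix.of fun i j => if i < j then 1 else 0

/-!
Both sides expand into signed sums of the weights `sign τ * ∏_b A[τ(2b), i_b] * B[τ(2b+1), j_b]`
of terms `(τ, (i_b, j_b)_b)` with all `i_b < j_b`. The determinants contribute exactly the terms
whose column pairs are interlaced, `j_b ≤ i_{b+1}`. Expanding every entry
`Σ_{p<q} (A_{rp} B_{sq} - A_{sp} B_{rq})` of the Pfaffian's matrix produces each term once per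
orbit of the action of `S_k` relabelling the blocks, and we may take as representative the term
whose blocks are sorted by `(i_b, τ(2b))`. On sorted terms that are not interlaced, exchanging the
`B`-data of the first two consecutive blocks with `i_{b+1} < j_b` is a sign-reversing involution,
so only the interlaced terms survive.
-/

open Equiv Finset

namespace MinorSummation

variable {k n : ℕ}

def blockEquiv (k : ℕ) : Fin k × Fin 2 ≃ Fin (2 * k) where
  toFun p := ⟨2 * p.1 + p.2, by omega⟩
  invFun c := (⟨c / 2, by omega⟩, ⟨c % 2, by omega⟩)
  left_inv p := by ext <;> simp <;> omega
  right_inv c := by ext; simp; omega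

def evenIdx (i : Fin k) : Fin (2 * k) := ⟨2 * i, by omega⟩

def oddIdx (i : Fin k) : Fin (2 * k) := ⟨2 * i + 1, by omega⟩

@[simp] lemma blockEquiv_zero (i : Fin k) : blockEquiv k (i, 0) = evenIdx i := rfl

@[simp] lemma blockEquiv_one (i : Fin k) : blockEquiv k (i, 1) = oddIdx i := rfl

lemma evenIdx_injective : Function.Injective (evenIdx (k := k)) := by
  intro i j h; simp [evenIdx, Fin.ext_iff] at h; exact Fin.ext h

lemma oddIdx_injective : Function.Injective (oddIdx (k := k)) := by
  intro i j h; simp [oddIdx, Fin.ext_iff] at h; exact Fin.ext h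

lemma evenIdx_ne_oddIdx (i j : Fin k) : evenIdx i ≠ oddIdx j := by
  simp [evenIdx, oddIdx, Fin.ext_iff]; omega

lemma prod_eq_prod_evenIdx_mul_oddIdx {M : Type*} [CommMonoid M] (f : Fin (2 * k) → M) :
    ∏ c, f c = ∏ i, f (evenIdx i) * f (oddIdx i) := by
  rw [← (blockEquiv k).prod_comp, Fintype.prod_prod_type]
  simp [Fin.prod_univ_two]

lemma perm_ext_of_evenIdx_oddIdx {σ τ : Perm (Fin (2 * k))}
    (he : ∀ i, σ (evenIdx i) = τ (evenIdx i)) (ho : ∀ i, σ (oddIdx i) = τ (oddIdx i)) :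
    σ = τ := by
  ext1 c
  obtain ⟨⟨i, b⟩, rfl⟩ := (blockEquiv k).surjective c
  fin_cases b
  exacts [he i, ho i]

/-- A term of the expansions: a row permutation together with the pair of columns
`(i_b, j_b)` of each block `b`. -/
abbrev Term (k n : ℕ) := Perm (Fin (2 * k)) × (Fin k → Fin n × Fin n)

variable {R : Type*} [CommRing R]

def weight (A B : Matrix (Fin (2 * k)) (Fin n) R) (x : Term k n) : R :=
  (Perm.sign x.1 : ℤ) * ∏ i, A (x.1 (evenIdx i)) (x.2 i).1 * B (x.1 (oddIdx i)) (x.2 i).2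

def blockPerm (γ : Perm (Fin k)) : Perm (Fin (2 * k)) :=
  (blockEquiv k).permCongr (prodCongrLeft fun _ => γ)

@[simp] lemma blockPerm_evenIdx (γ : Perm (Fin k)) (i : Fin k) :
    blockPerm γ (evenIdx i) = evenIdx (γ i) := by
  simp [blockPerm, ← blockEquiv_zero, permCongr_apply]

@[simp] lemma blockPerm_oddIdx (γ : Perm (Fin k)) (i : Fin k) :
    blockPerm γ (oddIdx i) = oddIdx (γ i) := by
  simp [blockPerm, ← blockEquiv_one, permCongr_apply]

lemma sign_blockPerm (γ : Perm (Fin k)) : Perm.sign (blockPerm γ) = 1 := by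
  simp [blockPerm, Perm.sign_prodCongrLeft, Int.units_sq]

def relabel (γ : Perm (Fin k)) (x : Term k n) : Term k n :=
  (x.1 * blockPerm γ, x.2 ∘ γ)

@[simp] lemma relabel_one (x : Term k n) : relabel 1 x = x := by
  refine Prod.ext (perm_ext_of_evenIdx_oddIdx ?_ ?_) rfl <;> simp [relabel]

lemma relabel_relabel (γ δ : Perm (Fin k)) (x : Term k n) :
    relabel δ (relabel γ x) = relabel (γ * δ) x := by
  refine Prod.ext (perm_ext_of_evenIdx_oddIdx ?_ ?_) rfl <;> simp [relabel]

lemma weight_relabel (A B : Matrix (Fin (2 * k)) (Fin n) R) (γ : Perm (Fin k)) (x : Term k n) :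
    weight A B (relabel γ x) = weight A B x := by
  simp only [weight, relabel, Perm.sign_mul, sign_blockPerm, mul_one]
  congr 1
  simpa using Equiv.prod_comp γ fun i =>
    A (x.1 (evenIdx i)) (x.2 i).1 * B (x.1 (oddIdx i)) (x.2 i).2

lemma _root_.Tuple.sort_eq_of_monotone {m : ℕ} {α : Type*} [LinearOrder α] {f : Fin m → α}
    (hf : Function.Injective f) {σ : Perm (Fin m)} (h : Monotone (f ∘ σ)) :
    Tuple.sort f = σ :=
  (Tuple.eq_sort_iff.mpr ⟨h, fun _ _ hij he => absurd (σ.injective (hf he)) hij.ne⟩).symm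

section NormalForm

variable {α : Type*} [LinearOrder α] {key : Term k n → Fin k → α}

def sortBy (key : Term k n → Fin k → α) (x : Term k n) : Term k n :=
  relabel (Tuple.sort (key x)) x

lemma strictMono_key_sortBy (hinj : ∀ x, Function.Injective (key x))
    (hrel : ∀ γ x, key (relabel γ x) = key x ∘ γ) (x : Term k n) :
    StrictMono (key (sortBy key x)) := by
  rw [sortBy, hrel]
  exact (Tuple.monotone_sort _).strictMono_of_injective ((hinj x).comp (Equiv.injective _))

lemma sortBy_relabel (hinj : ∀ x, Function.Injective (key x))
    (hrel : ∀ γ x, key (relabel γ x) = key x ∘ γ) (γ : Perm (Fin k)) (x : Term k n) :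
    sortBy key (relabel γ x) = sortBy key x := by
  have hsort : Tuple.sort (key (relabel γ x)) = γ⁻¹ * Tuple.sort (key x) := by
    refine Tuple.sort_eq_of_monotone (hinj _) ?_
    convert Tuple.monotone_sort (key x) using 1
    ext i
    simp [hrel]
  rw [sortBy, hsort, relabel_relabel, mul_inv_cancel_left, sortBy]

lemma sortBy_eq_self (hinj : ∀ x, Function.Injective (key x)) {x : Term k n}
    (hx : StrictMono (key x)) : sortBy key x = x := by
  rw [sortBy, Tuple.sort_eq_of_monotone (σ := 1) (hinj x) hx.monotone, relabel_one]

lemma sum_strictMono_key_eq {β M : Type*} [LinearOrder β] [AddCommMonoid M]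
    {key' : Term k n → Fin k → β} (hinj : ∀ x, Function.Injective (key x))
    (hrel : ∀ γ x, key (relabel γ x) = key x ∘ γ) (hinj' : ∀ x, Function.Injective (key' x))
    (hrel' : ∀ γ x, key' (relabel γ x) = key' x ∘ γ) (p : Term k n → Prop) [DecidablePred p]
    (hp : ∀ γ x, p (relabel γ x) ↔ p x) (f : Term k n → M) (hf : ∀ γ x, f (relabel γ x) = f x) :
    ∑ x ∈ univ.filter (fun x => StrictMono (key x) ∧ p x), f x =
      ∑ x ∈ univ.filter (fun x => StrictMono (key' x) ∧ p x), f x := by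
  refine sum_nbij' (sortBy key') (sortBy key) ?_ ?_ ?_ ?_ (fun x _ => (hf _ x).symm)
  · intro x hx
    simp only [mem_filter, mem_univ, true_and] at hx ⊢
    exact ⟨strictMono_key_sortBy hinj' hrel' x, (hp _ x).2 hx.2⟩
  · intro x hx
    simp only [mem_filter, mem_univ, true_and] at hx ⊢
    exact ⟨strictMono_key_sortBy hinj hrel x, (hp _ x).2 hx.2⟩
  · exact fun x hx =>
      (sortBy_relabel hinj hrel _ x).trans (sortBy_eq_self hinj (mem_filter.1 hx).2.1)
  · exact fun x hx =>
      (sortBy_relabel hinj' hrel' _ x).trans (sortBy_eq_self hinj' (mem_filter.1 hx).2.1)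

end NormalForm

def PairsLt (P : Fin k → Fin n × Fin n) : Prop := ∀ i, (P i).1 < (P i).2

/-- The interlacing `j_b ≤ i_{b+1}` of consecutive blocks. -/
def Chained (P : Fin k → Fin n × Fin n) : Prop :=
  ∀ i j : Fin k, (i : ℕ) + 1 = j → (P i).2 ≤ (P j).1

instance : DecidablePred (PairsLt (k := k) (n := n)) := fun _ => by unfold PairsLt; infer_instance

instance : DecidablePred (Chained (k := k) (n := n)) := fun _ => by unfold Chained; infer_instance

lemma pairsLt_comp {P : Fin k → Fin n × Fin n} (γ : Perm (Fin k)) :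
    PairsLt (P ∘ γ) ↔ PairsLt P :=
  ⟨fun h i => by simpa using h (γ.symm i), fun h i => h (γ i)⟩

def pairUp (α : Type*) : (Fin (2 * k) → α) ≃ (Fin k → α × α) :=
  ((blockEquiv k).symm.arrowCongr (Equiv.refl α)).trans
    ((Equiv.curry _ _ _).trans (Equiv.piCongrRight fun _ => finTwoArrowEquiv α))

@[simp] lemma pairUp_apply {α : Type*} (d : Fin (2 * k) → α) (i : Fin k) :
    pairUp α d i = (d (evenIdx i), d (oddIdx i)) := rfl

section Determinant

variable (A B : Matrix (Fin (2 * k)) (Fin n) R)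

lemma det_eq_sum_weight (d : Fin (2 * k) → Fin n) :
    (Matrix.of fun r c : Fin (2 * k) => if (c : ℕ) % 2 = 0 then A r (d c) else B r (d c)).det =
      ∑ τ, weight A B (τ, pairUp _ d) := by
  refine (Matrix.det_apply _).trans (sum_congr rfl fun τ _ => ?_)
  rw [weight, Units.smul_def, zsmul_eq_mul, prod_eq_prod_evenIdx_mul_oddIdx]
  simp [evenIdx, oddIdx, Nat.add_mod]

lemma interlacing_iff_pairsLt_and_chained (d : Fin (2 * k) → Fin n) :
    (∀ s t : Fin (2 * k), (s : ℕ) + 1 = (t : ℕ) →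
        ((s : ℕ) % 2 = 0 → d s < d t) ∧ ((s : ℕ) % 2 = 1 → d s ≤ d t)) ↔
      PairsLt (pairUp _ d) ∧ Chained (pairUp _ d) := by
  constructor
  · intro h
    refine ⟨fun i => (h (evenIdx i) (oddIdx i) rfl).1 (by simp [evenIdx]), fun i j hij => ?_⟩
    exact (h (oddIdx i) (evenIdx j) (by simp [evenIdx, oddIdx]; omega)).2
      (by simp [oddIdx, Nat.add_mod])
  · rintro ⟨hlt, hchain⟩ s t hst
    obtain ⟨⟨i, b⟩, rfl⟩ := (blockEquiv k).surjective s
    fin_cases b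
    · obtain rfl : t = oddIdx i := Fin.ext (by simp [evenIdx, oddIdx] at hst ⊢; omega)
      exact ⟨fun _ => hlt i, fun h => by simp [evenIdx] at h⟩
    · have hj : (i : ℕ) + 1 < k := by simp [oddIdx] at hst; omega
      obtain rfl : t = evenIdx ⟨i + 1, hj⟩ := Fin.ext (by simp [evenIdx, oddIdx] at hst ⊢; omega)
      exact ⟨fun h => by simp [oddIdx, Nat.add_mod] at h,
        fun _ => by simpa using hchain i ⟨i + 1, hj⟩ rfl⟩

theorem sum_det_eq_sum_weight :
    (∑ d ∈ univ.filter (fun d : Fin (2 * k) → Fin n =>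
        ∀ s t : Fin (2 * k), (s : ℕ) + 1 = (t : ℕ) →
          ((s : ℕ) % 2 = 0 → d s < d t) ∧ ((s : ℕ) % 2 = 1 → d s ≤ d t)),
      (Matrix.of fun r c : Fin (2 * k) =>
        if (c : ℕ) % 2 = 0 then A r (d c) else B r (d c)).det) =
      ∑ x ∈ univ.filter (fun x : Term k n => PairsLt x.2 ∧ Chained x.2), weight A B x := by
  calc _ = ∑ P ∈ univ.filter (fun P => PairsLt P ∧ Chained P), ∑ τ, weight A B (τ, P) :=
        sum_equiv (pairUp _) (by simp [interlacing_iff_pairsLt_and_chained])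
          fun d _ => det_eq_sum_weight A B d
    _ = _ := by rw [← univ_product_univ, filter_product_right (fun P => PairsLt P ∧ Chained P),
      sum_product_right]

end Determinant

section Pfaffian

lemma mul_upperTri_mul_transpose_apply {m m' : Type*} (A : Matrix m (Fin n) R)
    (B : Matrix m' (Fin n) R) (r : m) (s : m') :
    (A * upperTri R n * Bᵀ) r s =
      ∑ pq ∈ univ.filter (fun pq : Fin n × Fin n => pq.1 < pq.2), A r pq.1 * B s pq.2 := by
  simp only [Matrix.mul_apply, Matrix.transpose_apply, upperTri, Matrix.of_apply, mul_ite, mul_one,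
    mul_zero, sum_filter, ← univ_product_univ, sum_product, sum_mul, ite_mul, zero_mul]
  exact sum_comm

lemma upperTri_antisymmetrization_apply (A B : Matrix (Fin (2 * k)) (Fin n) R)
    (r s : Fin (2 * k)) :
    (A * upperTri R n * Bᵀ - B * (upperTri R n)ᵀ * Aᵀ) r s =
      ∑ pq ∈ univ.filter (fun pq : Fin n × Fin n => pq.1 < pq.2),
        (A r pq.1 * B s pq.2 - A s pq.1 * B r pq.2) := by
  have : B * (upperTri R n)ᵀ * Aᵀ = (A * upperTri R n * Bᵀ)ᵀ := by
    simp [Matrix.transpose_mul, Matrix.mul_assoc]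
  rw [this, Matrix.sub_apply, Matrix.transpose_apply, mul_upperTri_mul_transpose_apply,
    mul_upperTri_mul_transpose_apply, ← sum_sub_distrib]

def swaps (ε : Fin k → Bool) : Perm (Fin (2 * k)) :=
  (blockEquiv k).permCongr (prodCongrRight fun i => if ε i then 1 else swap 0 1)

lemma swaps_evenIdx (ε : Fin k → Bool) (i : Fin k) :
    swaps ε (evenIdx i) = if ε i then evenIdx i else oddIdx i := by
  cases h : ε i <;> simp [swaps, ← blockEquiv_zero, ← blockEquiv_one, permCongr_apply, h]

lemma swaps_oddIdx (ε : Fin k → Bool) (i : Fin k) :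
    swaps ε (oddIdx i) = if ε i then oddIdx i else evenIdx i := by
  cases h : ε i <;> simp [swaps, ← blockEquiv_zero, ← blockEquiv_one, permCongr_apply, h]

lemma swaps_mul_self (ε : Fin k → Bool) : swaps ε * swaps ε = 1 := by
  refine perm_ext_of_evenIdx_oddIdx (fun i => ?_) (fun i => ?_) <;>
    cases h : ε i <;> simp [swaps_evenIdx, swaps_oddIdx, h]

lemma sign_swaps (ε : Fin k → Bool) : Perm.sign (swaps ε) = ∏ i, if ε i then 1 else -1 := by
  simp only [swaps, Perm.sign_permCongr, Perm.sign_prodCongrRight, apply_ite Perm.sign,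
    Perm.sign_one, Perm.sign_swap (show (0 : Fin 2) ≠ 1 by decide)]

variable (A B : Matrix (Fin (2 * k)) (Fin n) R)

lemma weight_mul_swaps (σ : Perm (Fin (2 * k))) (P : Fin k → Fin n × Fin n) (ε : Fin k → Bool) :
    weight A B (σ * swaps ε, P) = (Perm.sign σ : ℤ) * ∏ i, if ε i
      then A (σ (evenIdx i)) (P i).1 * B (σ (oddIdx i)) (P i).2
      else -(A (σ (oddIdx i)) (P i).1 * B (σ (evenIdx i)) (P i).2) := by
  rw [weight, Perm.sign_mul, sign_swaps, Units.val_mul, Int.cast_mul, mul_assoc]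
  push_cast
  rw [← prod_mul_distrib]
  congr 1
  refine prod_congr rfl fun i _ => ?_
  cases h : ε i <;> simp [swaps_evenIdx, swaps_oddIdx, h]

lemma sign_mul_prod_upperTri_antisymmetrization (σ : Perm (Fin (2 * k))) :
    (Perm.sign σ : ℤ) * ∏ i, (A * upperTri R n * Bᵀ - B * (upperTri R n)ᵀ * Aᵀ)
        (σ (evenIdx i)) (σ (oddIdx i)) =
      ∑ ε, ∑ P ∈ univ.filter PairsLt, weight A B (σ * swaps ε, P) := by
  have hpi : Fintype.piFinset (fun _ : Fin k => univ.filter fun pq : Fin n × Fin n => pq.1 < pq.2)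
      = univ.filter PairsLt := by
    ext P; simp [PairsLt]
  simp_rw [upperTri_antisymmetrization_apply, prod_univ_sum, hpi, mul_sum, weight_mul_swaps]
  rw [sum_comm]
  refine sum_congr rfl fun P _ => ?_
  -- Picking `a` in factor `i` keeps block `i` of `σ`, picking `-b` flips it.
  have hsub (a b : R) : a - b = ∑ e : Bool, if e then a else -b := by
    simp [sub_eq_add_neg]
  simp_rw [← mul_sum, hsub, Fintype.prod_sum]

end Pfaffian

section Matchings

/-- Sorting the blocks by this key is the normal form of matchings used by `pfaffian`. -/
def minRow (τ : Perm (Fin (2 * k))) (i : Fin k) : Fin (2 * k) :=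
  min (τ (evenIdx i)) (τ (oddIdx i))

lemma minRow_injective (τ : Perm (Fin (2 * k))) : Function.Injective (minRow τ) := by
  intro i j h
  simp only [minRow] at h
  rcases min_choice (τ (evenIdx i)) (τ (oddIdx i)) with hi | hi <;>
    rcases min_choice (τ (evenIdx j)) (τ (oddIdx j)) with hj | hj <;>
    rw [hi, hj] at h <;> have h := τ.injective h
  · exact evenIdx_injective h
  · exact absurd h (evenIdx_ne_oddIdx i j)
  · exact absurd h.symm (evenIdx_ne_oddIdx j i)
  · exact oddIdx_injective h

lemma minRow_relabel (γ : Perm (Fin k)) (x : Term k n) :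
    minRow (relabel γ x).1 = minRow x.1 ∘ γ := by
  ext i; simp [minRow, relabel]

lemma minRow_mul_swaps (τ : Perm (Fin (2 * k))) (ε : Fin k → Bool) :
    minRow (τ * swaps ε) = minRow τ := by
  ext i
  cases h : ε i <;> simp [minRow, swaps_evenIdx, swaps_oddIdx, h, min_comm]

def orientation (τ : Perm (Fin (2 * k))) (i : Fin k) : Bool :=
  decide (τ (evenIdx i) < τ (oddIdx i))

lemma orientation_mul_swaps {σ : Perm (Fin (2 * k))} (hσ : ∀ i, σ (evenIdx i) < σ (oddIdx i))
    (ε : Fin k → Bool) : orientation (σ * swaps ε) = ε := by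
  ext i
  cases h : ε i <;> simp [orientation, swaps_evenIdx, swaps_oddIdx, h, hσ i, (hσ i).le]

lemma mul_swaps_orientation_evenIdx (τ : Perm (Fin (2 * k))) (i : Fin k) :
    (τ * swaps (orientation τ)) (evenIdx i) = minRow τ i := by
  by_cases h : τ (evenIdx i) < τ (oddIdx i)
  · simp [orientation, minRow, swaps_evenIdx, h, h.le]
  · simp [orientation, minRow, swaps_evenIdx, h, le_of_not_gt h]

lemma mul_swaps_orientation_lt (τ : Perm (Fin (2 * k))) (i : Fin k) :
    (τ * swaps (orientation τ)) (evenIdx i) < (τ * swaps (orientation τ)) (oddIdx i) := by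
  by_cases h : τ (evenIdx i) < τ (oddIdx i)
  · simp [orientation, swaps_evenIdx, swaps_oddIdx, h]
  · simp only [orientation, h, Perm.mul_apply, swaps_evenIdx, swaps_oddIdx, decide_false,
      Bool.false_eq_true, if_false]
    exact lt_of_le_of_ne (not_lt.1 h) (τ.injective.ne (evenIdx_ne_oddIdx i i)).symm

def matchings (k : ℕ) : Finset (Perm (Fin (2 * k))) :=
  univ.filter fun σ => (∀ i, σ (evenIdx i) < σ (oddIdx i)) ∧
    ∀ i j : Fin k, i < j → σ (evenIdx i) < σ (evenIdx j)

lemma pfaffian_eq_sum_matchings (Y : Matrix (Fin (2 * k)) (Fin (2 * k)) R) :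
    pfaffian Y = ∑ σ ∈ matchings k, (Perm.sign σ : ℤ) * ∏ i, Y (σ (evenIdx i)) (σ (oddIdx i)) :=
  rfl

lemma sum_matchings_mul_swaps {M : Type*} [AddCommMonoid M] (g : Perm (Fin (2 * k)) → M) :
    ∑ σ ∈ matchings k, ∑ ε, g (σ * swaps ε) =
      ∑ τ ∈ univ.filter (fun τ => StrictMono (minRow τ)), g τ := by
  rw [← sum_product' (f := fun σ ε => g (σ * swaps ε))]
  refine sum_nbij' (fun p => p.1 * swaps p.2)
    (fun τ => (τ * swaps (orientation τ), orientation τ)) ?_ ?_ ?_ ?_ fun _ _ => rfl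
  · rintro ⟨σ, ε⟩ h
    simp only [matchings, mem_product, mem_filter, mem_univ, true_and, and_true] at h ⊢
    rw [minRow_mul_swaps]
    intro i j hij
    simpa [minRow, (h.1 i).le, (h.1 j).le] using h.2 i j hij
  · intro τ h
    simp only [matchings, mem_product, mem_filter, mem_univ, true_and, and_true] at h ⊢
    refine ⟨mul_swaps_orientation_lt τ, fun i j hij => ?_⟩
    simpa only [mul_swaps_orientation_evenIdx] using h hij
  · rintro ⟨σ, ε⟩ h
    simp only [matchings, mem_product, mem_filter, mem_univ, true_and, and_true] at h
    simp [orientation_mul_swaps h.1, mul_assoc, swaps_mul_self]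
  · intro τ _
    simp [mul_assoc, swaps_mul_self]

theorem pfaffian_eq_sum_weight (A B : Matrix (Fin (2 * k)) (Fin n) R) :
    pfaffian (A * upperTri R n * Bᵀ - B * (upperTri R n)ᵀ * Aᵀ) =
      ∑ x ∈ univ.filter (fun x : Term k n => StrictMono (minRow x.1) ∧ PairsLt x.2),
        weight A B x := by
  rw [pfaffian_eq_sum_matchings]
  calc _ = ∑ σ ∈ matchings k, ∑ ε, ∑ P ∈ univ.filter PairsLt, weight A B (σ * swaps ε, P) :=
        sum_congr rfl fun σ _ => sign_mul_prod_upperTri_antisymmetrization A B σ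
    _ = ∑ τ ∈ univ.filter (fun τ => StrictMono (minRow τ)),
          ∑ P ∈ univ.filter PairsLt, weight A B (τ, P) :=
        sum_matchings_mul_swaps fun τ => ∑ P ∈ univ.filter PairsLt, weight A B (τ, P)
    _ = _ := by rw [← sum_product (f := weight A B), ← filter_product, univ_product_univ]

end Matchings

section Involution

/-- Unlike `minRow`, this key is not changed by exchanging `B`-data between blocks. -/
def colKey (x : Term k n) (i : Fin k) : Fin n ×ₗ Fin (2 * k) :=
  toLex ((x.2 i).1, x.1 (evenIdx i))

lemma colKey_injective (x : Term k n) : Function.Injective (colKey x) :=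
  fun _ _ h => evenIdx_injective (x.1.injective (congrArg (fun p => (ofLex p).2) h))

lemma colKey_relabel (γ : Perm (Fin k)) (x : Term k n) :
    colKey (relabel γ x) = colKey x ∘ γ := by
  funext i; simp [colKey, relabel]

lemma _root_.Fin.strictMono_of_lt_of_add_one_eq {α : Type*} [Preorder α] {f : Fin k → α}
    (h : ∀ i j : Fin k, (i : ℕ) + 1 = j → f i < f j) : StrictMono f := by
  cases k with
  | zero => exact fun i => i.elim0
  | succ k => exact Fin.strictMono_iff_lt_succ.2 fun i => h _ _ (by simp)

lemma strictMono_colKey_of_chained {x : Term k n} (hlt : PairsLt x.2) (hchain : Chained x.2) :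
    StrictMono (colKey x) := by
  have hfst : StrictMono fun i => (x.2 i).1 :=
    Fin.strictMono_of_lt_of_add_one_eq fun i j hij => (hlt i).trans_le (hchain i j hij)
  exact fun i j hij => Prod.Lex.lt_iff.2 (Or.inl (hfst hij))

def swapB (t u : Fin k) (x : Term k n) : Term k n :=
  (x.1 * swap (oddIdx t) (oddIdx u), fun i => ((x.2 i).1, (x.2 (swap t u i)).2))

variable {t u : Fin k} {x : Term k n}

lemma swapB_swapB : swapB t u (swapB t u x) = x :=
  Prod.ext (by simp [swapB, mul_assoc]) (by ext i <;> simp [swapB])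

lemma colKey_swapB : colKey (swapB t u x) = colKey x := by
  funext i; simp [colKey, swapB, swap_apply_of_ne_of_ne (evenIdx_ne_oddIdx i t)
    (evenIdx_ne_oddIdx i u)]

lemma swapB_ne (htu : t ≠ u) : swapB t u x ≠ x := by
  intro h
  have := congrArg (fun y : Term k n => y.1 (oddIdx t)) h
  simp only [swapB, Perm.mul_apply, swap_apply_left] at this
  exact htu (oddIdx_injective (x.1.injective this)).symm

lemma weight_swapB (A B : Matrix (Fin (2 * k)) (Fin n) R) (htu : t ≠ u) :
    weight A B (swapB t u x) = -weight A B x := by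
  have hA (i : Fin k) : swap (oddIdx t) (oddIdx u) (evenIdx i) = evenIdx i :=
    swap_apply_of_ne_of_ne (evenIdx_ne_oddIdx i t) (evenIdx_ne_oddIdx i u)
  have hB : ∏ i, B (x.1 (swap (oddIdx t) (oddIdx u) (oddIdx i))) (x.2 (swap t u i)).2 =
      ∏ i, B (x.1 (oddIdx i)) (x.2 i).2 := by
    simp_rw [oddIdx_injective.swap_apply]
    exact Equiv.prod_comp (swap t u) fun i => B (x.1 (oddIdx i)) (x.2 i).2
  simp only [weight, swapB, Perm.sign_mul, Perm.sign_swap (oddIdx_injective.ne htu),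
    prod_mul_distrib, Perm.mul_apply, hA, hB]
  push_cast
  ring

def IsFirstDescent (P : Fin k → Fin n × Fin n) (t u : Fin k) : Prop :=
  (t : ℕ) + 1 = u ∧ (P u).1 < (P t).2 ∧
    ∀ i j : Fin k, (i : ℕ) + 1 = j → (P j).1 < (P i).2 → t ≤ i

lemma IsFirstDescent.ne {P : Fin k → Fin n × Fin n} (h : IsFirstDescent P t u) : t ≠ u :=
  fun htu => by have := h.1; simp [htu] at this

lemma IsFirstDescent.not_chained {P : Fin k → Fin n × Fin n} (h : IsFirstDescent P t u) :
    ¬ Chained P :=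
  fun hchain => (hchain t u h.1).not_gt h.2.1

lemma IsFirstDescent.unique {P : Fin k → Fin n × Fin n} {t' u' : Fin k}
    (h : IsFirstDescent P t u) (h' : IsFirstDescent P t' u') : t = t' ∧ u = u' := by
  have htt : t = t' := le_antisymm (h.2.2 t' u' h'.1 h'.2.1) (h'.2.2 t u h.1 h.2.1)
  exact ⟨htt, Fin.ext (by rw [← h.1, ← h'.1, htt])⟩

lemma exists_isFirstDescent {P : Fin k → Fin n × Fin n} (h : ¬ Chained P) :
    ∃ t u, IsFirstDescent P t u := by
  classical
  simp only [Chained, not_forall, not_le] at h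
  obtain ⟨i, j, hij, hji⟩ := h
  obtain ⟨t, ht, hmin⟩ := (univ.filter fun i : Fin k =>
    ∃ j : Fin k, (i : ℕ) + 1 = j ∧ (P j).1 < (P i).2).exists_min_image id
    ⟨i, mem_filter.2 ⟨mem_univ _, j, hij, hji⟩⟩
  obtain ⟨u, htu, hut⟩ := (mem_filter.1 ht).2
  exact ⟨t, u, htu, hut, fun i j hij hji => hmin i (mem_filter.2 ⟨mem_univ _, j, hij, hji⟩)⟩

lemma isFirstDescent_swapB (hlt : PairsLt x.2) (h : IsFirstDescent x.2 t u) :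
    IsFirstDescent (swapB t u x).2 t u := by
  refine ⟨h.1, by simpa [swapB] using hlt u, fun i j hij hji => ?_⟩
  by_contra hti
  have htu := h.1
  have hiu : i ≠ u := by rintro rfl; exact hti (Fin.le_def.2 (by omega))
  simp only [swapB, swap_apply_of_ne_of_ne (ne_of_not_le hti).symm hiu] at hji
  exact hti (h.2.2 i j hij hji)

lemma pairsLt_swapB (hlt : PairsLt x.2) (hsorted : StrictMono (colKey x))
    (h : IsFirstDescent x.2 t u) : PairsLt (swapB t u x).2 := by
  intro i
  show (x.2 i).1 < (x.2 (swap t u i)).2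
  rcases eq_or_ne i t with rfl | hit
  · have htu : i ≤ u := Fin.le_def.2 (by have := h.1; omega)
    rw [swap_apply_left]
    exact (Prod.Lex.monotone_fst _ _ (hsorted.monotone htu)).trans_lt (hlt u)
  rcases eq_or_ne i u with rfl | hiu
  · simpa using h.2.1
  · simpa [swap_apply_of_ne_of_ne hit hiu] using hlt i

open Classical in
noncomputable def descentFlip (x : Term k n) : Term k n :=
  if h : ∃ p : Fin k × Fin k, IsFirstDescent x.2 p.1 p.2 then swapB h.choose.1 h.choose.2 x
  else x

lemma descentFlip_eq (h : IsFirstDescent x.2 t u) : descentFlip x = swapB t u x := by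
  have he : ∃ p : Fin k × Fin k, IsFirstDescent x.2 p.1 p.2 := ⟨(t, u), h⟩
  obtain ⟨h1, h2⟩ := he.choose_spec.unique h
  rw [descentFlip, dif_pos he, h1, h2]

variable (A B : Matrix (Fin (2 * k)) (Fin n) R)

theorem sum_not_chained_eq_zero :
    ∑ x ∈ univ.filter (fun x : Term k n => (StrictMono (colKey x) ∧ PairsLt x.2) ∧ ¬ Chained x.2),
      weight A B x = 0 := by
  have hdescent {x : Term k n} (hx : x ∈ univ.filter (fun x : Term k n =>
      (StrictMono (colKey x) ∧ PairsLt x.2) ∧ ¬ Chained x.2)) :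
      ∃ t u, IsFirstDescent x.2 t u := exists_isFirstDescent (mem_filter.1 hx).2.2
  refine sum_involution (fun x _ => descentFlip x) (fun x hx => ?_) (fun x hx _ => ?_)
    (fun x hx => ?_) (fun x hx => ?_)
  · obtain ⟨t, u, h⟩ := hdescent hx
    rw [descentFlip_eq h, weight_swapB A B h.ne, add_neg_cancel]
  · obtain ⟨t, u, h⟩ := hdescent hx
    rw [descentFlip_eq h]
    exact swapB_ne h.ne
  · obtain ⟨t, u, h⟩ := hdescent hx
    obtain ⟨-, ⟨hsorted, hlt⟩, -⟩ := mem_filter.1 hx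
    rw [descentFlip_eq h, mem_filter, colKey_swapB]
    exact ⟨mem_univ _, ⟨hsorted, pairsLt_swapB hlt hsorted h⟩,
      (isFirstDescent_swapB hlt h).not_chained⟩
  · obtain ⟨t, u, h⟩ := hdescent hx
    rw [descentFlip_eq h, descentFlip_eq (isFirstDescent_swapB (mem_filter.1 hx).2.1.2 h),
      swapB_swapB]

theorem sum_sorted_eq_sum_chained :
    ∑ x ∈ univ.filter (fun x : Term k n => StrictMono (colKey x) ∧ PairsLt x.2), weight A B x =
      ∑ x ∈ univ.filter (fun x : Term k n => PairsLt x.2 ∧ Chained x.2), weight A B x := by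
  rw [← sum_filter_add_sum_filter_not _ (fun x => Chained x.2), filter_filter, filter_filter,
    sum_not_chained_eq_zero, add_zero]
  refine sum_congr (filter_congr fun x _ => ?_) fun _ _ => rfl
  exact ⟨fun h => ⟨h.1.2, h.2⟩, fun h => ⟨⟨strictMono_colKey_of_chained h.1 h.2, h.1⟩, h.2⟩⟩

end Involution

end MinorSummation

open MinorSummation

theorem sum_det_eq_pf_upperTri_general {R : Type*} [CommRing R] (k n : ℕ)
    (A B : Matrix (Fin (2*k)) (Fin n) R) :
    (∑ d ∈ Finset.univ.filter (fun d : Fin (2*k) → Fin n =>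
        ∀ s t : Fin (2*k), (s:ℕ) + 1 = (t:ℕ) →
          ((s:ℕ) % 2 = 0 → d s < d t) ∧ ((s:ℕ) % 2 = 1 → d s ≤ d t)),
      (Matrix.of fun r c : Fin (2*k) =>
        if (c:ℕ) % 2 = 0 then A r (d c) else B r (d c)).det)
      = pfaffian (A * upperTri R n * Bᵀ - B * (upperTri R n)ᵀ * Aᵀ) := by
  rw [sum_det_eq_sum_weight, pfaffian_eq_sum_weight,
    sum_strictMono_key_eq (fun x => minRow_injective x.1) minRow_relabel colKey_injective
      colKey_relabel _ (fun γ _ => pairsLt_comp γ) _ (weight_relabel A B),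
    sum_sorted_eq_sum_chained]

/-- Asymmetric extension of Okada's minor summation formula (first version):
for `m = 2k` even,
`Σ_{1≤i_1<j_1≤i_2<j_2≤⋯≤i_{m/2}<j_{m/2}≤n} det(A^{i_1}B^{j_1}⋯A^{i_{m/2}}B^{j_{m/2}})
= Pf(A·U_n·Bᵗ − B·U_nᵗ·Aᵗ)`.
Each summand is indexed by the sequence `d` of the `m` column indices
`i_1, j_1, i_2, j_2, …` (so `d_s < d_{s+1}` for even positions `s` and
`d_s ≤ d_{s+1}` for odd positions `s`, 0-based; the columns at even positions are
taken from `A`, those at odd positions from `B`). -/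
theorem sum_det_eq_pf_upperTri {R : Type*} [CommRing R] (k n : ℕ) (hk : 0 < k) (hn : 0 < n)
    (A B : Matrix (Fin (2*k)) (Fin n) R) :
    (∑ d ∈ Finset.univ.filter (fun d : Fin (2*k) → Fin n =>
        ∀ s t : Fin (2*k), (s:ℕ) + 1 = (t:ℕ) →
          ((s:ℕ) % 2 = 0 → d s < d t) ∧ ((s:ℕ) % 2 = 1 → d s ≤ d t)),
      (Matrix.of fun r c : Fin (2*k) =>
        if (c:ℕ) % 2 = 0 then A r (d c) else B r (d c)).det)
      = pfaffian (A * upperTri R n * Bᵀ - B * (upperTri R n)ᵀ * Aᵀ) :=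
  sum_det_eq_pf_upperTri_general k n A B
end
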